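/- arXiv:2312.16642 — 2 statements merged into one kernel-verified Lean document; each statement's English description precedes it below -/
import Mathlib

section
/- For every real a ≥ −1/2 and every x > 0, the inequality |I_a(x) − 2·I_{a+1}(x) + I_{a+2}(x)| < ( 3/(2x) + (a+1)(a+2)/x² ) · I_a(x) holds. -/
/-- The modified Bessel function of the first kind of real order `a`. -/
noncomputable def besselI (a x : ℝ) : ℝ :=
  ∑' k : ℕ, (x / 2) ^ (2 * (k : ℝ) + a) / ((Nat.factorial k : ℝ) * Real.Gamma (a + (k : ℝ) + 1))

noncomputable def besselJ (v y : ℝ) : ℝ :=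
  ∑' k : ℕ, y ^ k / ((Nat.factorial k : ℝ) * Real.Gamma (v + (k : ℝ) + 1))

lemma besselJ_def (v y : ℝ) :
    besselJ v y = ∑' k : ℕ, y ^ k / ((Nat.factorial k : ℝ) * Real.Gamma (v + (k : ℝ) + 1)) := rfl

lemma besselJ_zero {v : ℝ} : besselJ v 0 = 1 / Real.Gamma (v + 1) := by
  unfold besselJ
  rw [tsum_eq_single 0 ?_]
  · norm_num
  · intro k hk
    simp [zero_pow hk]

lemma gamma_pos {v : ℝ} (hv : -(1/2) ≤ v) (k : ℕ) : 0 < Real.Gamma (v + k + 1) := by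
  apply Real.Gamma_pos_of_pos
  have : (0:ℝ) ≤ k := Nat.cast_nonneg k
  linarith

lemma gamma_one_pos {v : ℝ} (hv : -(1/2) ≤ v) : 0 < Real.Gamma (v + 1) := by
  have := gamma_pos hv 0
  norm_num at this
  exact this

lemma gamma_succ {v : ℝ} (hv : -(1/2) ≤ v) (k : ℕ) :
    Real.Gamma (v + (k+1:ℕ) + 1) = (v + k + 1) * Real.Gamma (v + k + 1) := by
  have hc : (0:ℝ) ≤ k := Nat.cast_nonneg k
  have hne : (v + (k:ℝ) + 1) ≠ 0 := by intro h; nlinarith [hc]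
  have e : v + ((k+1:ℕ):ℝ) + 1 = (v + k + 1) + 1 := by push_cast; ring
  rw [e, Real.Gamma_add_one hne]

lemma gamma_lb {v : ℝ} (hv : -(1/2) ≤ v) (k : ℕ) :
    Real.Gamma (v + 1) * (Nat.factorial k) / 2 ^ k ≤ Real.Gamma (v + k + 1) := by
  induction k with
  | zero => norm_num
  | succ n ih =>
    have hc : (0:ℝ) ≤ n := Nat.cast_nonneg n
    rw [gamma_succ hv n]
    have hg := gamma_pos hv n
    have hΓ1 := gamma_one_pos hv
    have hfn : (0:ℝ) < (Nat.factorial n : ℝ) := by exact_mod_cast Nat.factorial_pos n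
    have h2 : ((n:ℝ) + 1) / 2 ≤ v + n + 1 := by linarith
    have h3 : ((n:ℝ)+1)/2 * (Real.Gamma (v + 1) * (Nat.factorial n) / 2 ^ n) ≤
        (v + n + 1) * Real.Gamma (v + n + 1) := by
      apply mul_le_mul h2 ih (by positivity) (by linarith)
    calc Real.Gamma (v + 1) * (Nat.factorial (n+1)) / 2 ^ (n+1)
        = ((n:ℝ)+1)/2 * (Real.Gamma (v + 1) * (Nat.factorial n) / 2 ^ n) := by
          rw [pow_succ, Nat.factorial_succ]; push_cast; ring
      _ ≤ _ := h3

lemma term_bound {v : ℝ} (hv : -(1/2) ≤ v) (y : ℝ) (k : ℕ) :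
    ‖y ^ k / ((Nat.factorial k : ℝ) * Real.Gamma (v + k + 1))‖ ≤
      (1 / Real.Gamma (v+1)) * ((2*|y|) ^ k / (Nat.factorial k)) := by
  have hgk := gamma_pos hv k
  have hΓ1 := gamma_one_pos hv
  have hfn : (0:ℝ) < (Nat.factorial k : ℝ) := by exact_mod_cast Nat.factorial_pos k
  have hfn1 : (1:ℝ) ≤ (Nat.factorial k : ℝ) := by exact_mod_cast Nat.one_le_iff_ne_zero.mpr (Nat.factorial_ne_zero k)
  rw [Real.norm_eq_abs, abs_div, abs_pow, abs_of_pos (mul_pos hfn hgk)]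
  rw [div_le_iff₀ (mul_pos hfn hgk)]
  have hlb := gamma_lb hv k
  have key : Real.Gamma (v+1) * (Nat.factorial k) ≤ Real.Gamma (v+k+1) * 2^k := by
    rw [div_le_iff₀ (by positivity : (0:ℝ) < 2^k)] at hlb
    linarith
  have e1 : (1 / Real.Gamma (v+1)) * ((2*|y|) ^ k / (Nat.factorial k)) * ((Nat.factorial k : ℝ) * Real.Gamma (v + k + 1))
      = (2:ℝ)^k * |y|^k * Real.Gamma (v+k+1) / Real.Gamma (v+1) := by
    rw [mul_pow]
    field_simp
  rw [e1, le_div_iff₀ hΓ1]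
  have hy0 : (0:ℝ) ≤ |y|^k := by positivity
  calc |y|^k * Real.Gamma (v+1) ≤ |y|^k * (Real.Gamma (v+1) * (Nat.factorial k)) :=
        mul_le_mul_of_nonneg_left (le_mul_of_one_le_right hΓ1.le hfn1) hy0
    _ ≤ |y|^k * (Real.Gamma (v+k+1) * 2^k) := mul_le_mul_of_nonneg_left key hy0
    _ = 2^k * |y|^k * Real.Gamma (v+k+1) := by ring

lemma summable_besselJ {v : ℝ} (hv : -(1/2) ≤ v) (y : ℝ) :
    Summable (fun k : ℕ => y ^ k / ((Nat.factorial k : ℝ) * Real.Gamma (v + k + 1))) := by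
  apply Summable.of_norm
  exact Summable.of_nonneg_of_le (fun k => norm_nonneg _) (term_bound hv y)
    (((Real.summable_pow_div_factorial (2*|y|)).mul_left (1 / Real.Gamma (v+1))))

lemma besselJ_pos {v : ℝ} (hv : -(1/2) ≤ v) {y : ℝ} (hy : 0 ≤ y) : 0 < besselJ v y := by
  unfold besselJ
  have hs := summable_besselJ hv y
  have hpos : ∀ k : ℕ, 0 ≤ y ^ k / ((Nat.factorial k : ℝ) * Real.Gamma (v + k + 1)) := by
    intro k
    have := gamma_pos hv k
    have hfn : (0:ℝ) < (Nat.factorial k : ℝ) := by exact_mod_cast Nat.factorial_pos k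
    positivity
  apply Summable.tsum_pos hs hpos 0
  have := gamma_one_pos hv
  norm_num
  positivity

lemma hv1 {v : ℝ} (hv : -(1/2) ≤ v) : -(1/2) ≤ v + 1 := by linarith
lemma hv2 {v : ℝ} (hv : -(1/2) ≤ v) : -(1/2) ≤ v + 2 := by linarith

lemma gamma_shift {v : ℝ} (hv : -(1/2) ≤ v) (k : ℕ) :
    Real.Gamma (v + 1 + k + 1) = (v + k + 1) * Real.Gamma (v + k + 1) := by
  have := gamma_succ hv k
  rw [show v + 1 + (k:ℝ) + 1 = v + ((k+1:ℕ):ℝ) + 1 by push_cast; ring]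
  exact this

lemma summable_w {v : ℝ} (hv : -(1/2) ≤ v) (y : ℝ) :
    Summable (fun k : ℕ => (k:ℝ) * y ^ k / ((Nat.factorial k : ℝ) * Real.Gamma (v + 1 + k + 1))) := by
  apply (summable_nat_add_iff 1).mp
  have he : (fun k : ℕ => ((k+1:ℕ):ℝ) * y ^ (k+1) / ((Nat.factorial (k+1) : ℝ) * Real.Gamma (v + 1 + ((k+1:ℕ):ℝ) + 1)))
      = fun k : ℕ => y * (y ^ k / ((Nat.factorial k : ℝ) * Real.Gamma (v + 2 + k + 1))) := by
    funext k
    have h1 : ((Nat.factorial (k+1) : ℝ)) = (k+1) * Nat.factorial k := by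
      rw [Nat.factorial_succ]; push_cast; ring
    have h2 : v + 1 + ((k+1:ℕ):ℝ) + 1 = v + 2 + k + 1 := by push_cast; ring
    rw [h1, h2]
    have hk1 : ((k:ℝ)+1) ≠ 0 := by positivity
    have hG : Real.Gamma (v + 2 + k + 1) ≠ 0 := (gamma_pos (hv2 hv) k).ne'
    have hf : ((Nat.factorial k : ℝ)) ≠ 0 := by
      have : (0:ℝ) < (Nat.factorial k : ℝ) := by exact_mod_cast Nat.factorial_pos k
      linarith
    push_cast
    field_simp
    ring
  rw [he]
  exact (summable_besselJ (hv2 hv) y).mul_left y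

lemma sum_w {v : ℝ} (hv : -(1/2) ≤ v) (y : ℝ) :
    ∑' k : ℕ, (k:ℝ) * y ^ k / ((Nat.factorial k : ℝ) * Real.Gamma (v + 1 + k + 1))
      = y * besselJ (v+2) y := by
  rw [Summable.tsum_eq_zero_add (summable_w hv y)]
  norm_num
  rw [besselJ_def]
  rw [← tsum_mul_left]
  apply tsum_congr
  intro k
  have h1 : ((Nat.factorial (k+1) : ℝ)) = (k+1) * Nat.factorial k := by
    rw [Nat.factorial_succ]; push_cast; ring
  have h2 : v + 1 + ((k:ℝ) + 1) + 1 = v + 2 + k + 1 := by ring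
  rw [h1, h2]
  have hk1 : ((k:ℝ)+1) ≠ 0 := by positivity
  have hG : Real.Gamma (v + 2 + k + 1) ≠ 0 := (gamma_pos (hv2 hv) k).ne'
  have hf : ((Nat.factorial k : ℝ)) ≠ 0 := by
    have : (0:ℝ) < (Nat.factorial k : ℝ) := by exact_mod_cast Nat.factorial_pos k
    linarith
  push_cast
  field_simp
  ring

lemma besselJ_rec {v : ℝ} (hv : -(1/2) ≤ v) (y : ℝ) :
    besselJ v y = (v+1) * besselJ (v+1) y + y * besselJ (v+2) y := by
  rw [← sum_w hv y, besselJ_def, besselJ_def, ← tsum_mul_left]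
  rw [← Summable.tsum_add ((summable_besselJ (hv1 hv) y).mul_left (v+1)) (summable_w hv y)]
  apply tsum_congr
  intro k
  have hG := gamma_shift hv k
  have hgk := gamma_pos hv k
  have hne : v + (k:ℝ) + 1 ≠ 0 := by
    have : (0:ℝ) ≤ k := Nat.cast_nonneg k; intro h; nlinarith
  have hfn : ((Nat.factorial k : ℝ)) ≠ 0 := by
    have : (0:ℝ) < (Nat.factorial k : ℝ) := by exact_mod_cast Nat.factorial_pos k
    linarith
  rw [hG]
  field_simp
  ring

lemma deriv_term_eq {v : ℝ} (hv : -(1/2) ≤ v) (r : ℝ) :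
    (fun k : ℕ => ((k+1:ℕ):ℝ) * r ^ ((k+1) - 1) / ((Nat.factorial (k+1) : ℝ) * Real.Gamma (v + ((k+1:ℕ):ℝ) + 1)))
    = fun k : ℕ => r ^ k / ((Nat.factorial k : ℝ) * Real.Gamma (v + 1 + k + 1)) := by
  funext k
  have h1 : ((Nat.factorial (k+1) : ℝ)) = (k+1) * Nat.factorial k := by
    rw [Nat.factorial_succ]; push_cast; ring
  have h2 : v + ((k+1:ℕ):ℝ) + 1 = v + 1 + k + 1 := by push_cast; ring
  rw [h1, h2, Nat.add_sub_cancel]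
  have hk1 : ((k:ℝ)+1) ≠ 0 := by positivity
  have hG : Real.Gamma (v + 1 + k + 1) ≠ 0 := (gamma_pos (hv1 hv) k).ne'
  have hf : ((Nat.factorial k : ℝ)) ≠ 0 := by
    have : (0:ℝ) < (Nat.factorial k : ℝ) := by exact_mod_cast Nat.factorial_pos k
    linarith
  push_cast
  field_simp

lemma summable_deriv_term {v : ℝ} (hv : -(1/2) ≤ v) (r : ℝ) :
    Summable (fun k : ℕ => (k:ℝ) * r ^ (k - 1) / ((Nat.factorial k : ℝ) * Real.Gamma (v + k + 1))) := by
  apply (summable_nat_add_iff 1).mp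
  have := deriv_term_eq hv r
  push_cast at this ⊢
  rw [this]
  exact summable_besselJ (hv1 hv) r

lemma besselJ_hasDerivAt {v : ℝ} (hv : -(1/2) ≤ v) (y : ℝ) :
    HasDerivAt (fun z => besselJ v z) (besselJ (v+1) y) y := by
  have hR : |y| < |y| + 1 := by linarith
  set R : ℝ := |y| + 1 with hRdef
  have hR0 : 0 < R := by positivity
  have key : HasDerivAt (fun z => ∑' k : ℕ, z ^ k / ((Nat.factorial k : ℝ) * Real.Gamma (v + k + 1)))
      (∑' k : ℕ, (k:ℝ) * y ^ (k-1) / ((Nat.factorial k : ℝ) * Real.Gamma (v + k + 1))) y := by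
    apply hasDerivAt_tsum_of_isPreconnected
      (u := fun k : ℕ => (k:ℝ) * R ^ (k - 1) / ((Nat.factorial k : ℝ) * Real.Gamma (v + k + 1)))
      (summable_deriv_term hv R) (isOpen_Ioo (a := -R) (b := R))
      ((convex_Ioo _ _).isPreconnected)
      (g' := fun k z => (k:ℝ) * z ^ (k-1) / ((Nat.factorial k : ℝ) * Real.Gamma (v + k + 1)))
      (y₀ := y)
    · intro k z hz
      exact (hasDerivAt_pow k z).div_const _
    · intro k z hz
      rw [Real.norm_eq_abs, abs_div, abs_mul]
      have hden : (0:ℝ) < (Nat.factorial k : ℝ) * Real.Gamma (v + k + 1) := by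
        have := gamma_pos hv k
        have hfp : (0:ℝ) < (Nat.factorial k : ℝ) := by exact_mod_cast Nat.factorial_pos k
        positivity
      rw [abs_of_pos hden, abs_of_nonneg (Nat.cast_nonneg k : (0:ℝ) ≤ k), abs_pow]
      have hzR : |z| ≤ R := (abs_lt.mpr ⟨hz.1, hz.2⟩).le
      gcongr
    · exact Set.mem_Ioo.mpr ⟨by cases abs_cases y <;> linarith, by cases abs_cases y <;> linarith⟩
    · exact summable_besselJ hv y
    · exact Set.mem_Ioo.mpr ⟨by cases abs_cases y <;> linarith, by cases abs_cases y <;> linarith⟩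
  have hsum : (∑' k : ℕ, (k:ℝ) * y ^ (k-1) / ((Nat.factorial k : ℝ) * Real.Gamma (v + k + 1)))
      = besselJ (v+1) y := by
    rw [Summable.tsum_eq_zero_add (summable_deriv_term hv y), besselJ_def]
    norm_num
    have := deriv_term_eq hv y
    push_cast at this
    rw [this]
  rw [← hsum]
  have hfun : (fun z => besselJ v z) = (fun z => ∑' k : ℕ, z ^ k / ((Nat.factorial k : ℝ) * Real.Gamma (v + k + 1))) := by
    funext z; rw [besselJ_def]
  rw [hfun]
  exact key

lemma besselJ_cont {v : ℝ} (hv : -(1/2) ≤ v) : Continuous (fun z => besselJ v z) :=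
  continuous_iff_continuousAt.mpr (fun y => (besselJ_hasDerivAt hv y).differentiableAt.continuousAt)

lemma turan {v : ℝ} (hv : -(1/2) ≤ v) {y : ℝ} (hy : 0 < y) :
    besselJ v y * besselJ (v+2) y ≤ (besselJ (v+1) y)^2 := by
  set M : ℝ → ℝ := fun z => (besselJ (v+1) z)^2 - besselJ v z * besselJ (v+2) z with hM
  set F : ℝ → ℝ := fun z => z ^ (v+2) * M z with hF
  have hMd : ∀ z : ℝ, HasDerivAt M
      (besselJ (v+1) z * besselJ (v+2) z - besselJ v z * besselJ (v+3) z) z := by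
    intro z
    have h1 := besselJ_hasDerivAt (hv1 hv) z
    have h0 := besselJ_hasDerivAt hv z
    have h2 := besselJ_hasDerivAt (hv2 hv) z
    have e3 : v + 2 + 1 = v + 3 := by ring
    rw [e3] at h2
    have e2 : v + 1 + 1 = v + 2 := by ring
    rw [e2] at h1
    have := (h1.pow 2).sub (h0.mul h2)
    refine this.congr_deriv (Eq.symm ?_)
    ring
  have hFd : ∀ z ∈ Set.Ioo (0:ℝ) y, HasDerivAt F (z ^ (v+1) * (besselJ (v+1) z)^2) z := by
    intro z hz
    have hz0 : 0 < z := hz.1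
    have hr : HasDerivAt (fun w : ℝ => w ^ (v+2)) ((v+2) * z ^ (v+1)) z := by
      have := Real.hasDerivAt_rpow_const (x := z) (p := v+2) (Or.inl hz0.ne')
      convert this using 2
      ring
    have := hr.mul (hMd z)
    refine this.congr_deriv (Eq.symm ?_)
    have e1 : z ^ (v+2) = z ^ (v+1) * z := by
      rw [show v+2 = (v+1)+1 by ring, Real.rpow_add hz0, Real.rpow_one]
    rw [e1]
    have hrec0 := besselJ_rec hv z
    have hrec1 := besselJ_rec (hv1 hv) z
    rw [show v+1+1 = v+2 by ring, show v+1+2 = v+3 by ring] at hrec1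
    simp only [hM]
    linear_combination (z ^ (v+1) * besselJ (v+1) z) * hrec0
      - (z^(v+1) * besselJ v z) * hrec1
  have hFc : ContinuousOn F (Set.Icc 0 y) := by
    intro z hz
    apply ContinuousWithinAt.mul
    · apply ContinuousAt.continuousWithinAt
      exact Real.continuousAt_rpow_const z (v+2) (Or.inr (by linarith))
    · apply Continuous.continuousWithinAt
      exact ((besselJ_cont (hv1 hv)).pow 2).sub ((besselJ_cont hv).mul (besselJ_cont (hv2 hv)))
  have hmono : MonotoneOn F (Set.Icc 0 y) := by
    apply monotoneOn_of_deriv_nonneg (convex_Icc 0 y) hFc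
    · rw [interior_Icc]
      exact fun z hz => ((hFd z hz).differentiableAt).differentiableWithinAt
    · rw [interior_Icc]
      intro z hz
      rw [(hFd z hz).deriv]
      have : (0:ℝ) < z ^ (v+1) := Real.rpow_pos_of_pos hz.1 _
      positivity
  have h0y : F 0 ≤ F y := hmono (Set.mem_Icc.mpr ⟨le_refl 0, hy.le⟩)
    (Set.mem_Icc.mpr ⟨hy.le, le_refl y⟩) hy.le
  have hF0 : F 0 = 0 := by
    simp only [hF]
    rw [Real.zero_rpow (by linarith : v + 2 ≠ 0)]
    ring
  rw [hF0] at h0y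
  have hyp : (0:ℝ) < y ^ (v+2) := Real.rpow_pos_of_pos hy _
  simp only [hF, hM] at h0y
  nlinarith

lemma besselK_nonneg {v : ℝ} (hv : -(1/2) ≤ v) {y : ℝ} (hy : 0 ≤ y) :
    (v+1/2) * (besselJ v y * besselJ (v+1) y) + y * (besselJ (v+1) y)^2 ≤ (besselJ v y)^2 := by
  set K : ℝ → ℝ := fun z => (besselJ v z)^2 - z * (besselJ (v+1) z)^2
    - (v+1/2) * (besselJ v z * besselJ (v+1) z) with hK
  have hKd : ∀ z : ℝ, HasDerivAt K
      ((v+1/2) * ((besselJ (v+1) z)^2 - besselJ v z * besselJ (v+2) z)) z := by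
    intro z
    have h0 := besselJ_hasDerivAt hv z
    have h1 := besselJ_hasDerivAt (hv1 hv) z
    rw [show v+1+1 = v+2 by ring] at h1
    have hid : HasDerivAt (fun w : ℝ => w) 1 z := hasDerivAt_id z
    have hd := ((h0.pow 2).sub ((hid.mul (h1.pow 2)))).sub
      (((h0.mul h1)).const_mul (v+1/2))
    refine hd.congr_deriv (Eq.symm ?_)
    simp only [Pi.pow_apply]
    have hrec0 := besselJ_rec hv z
    linear_combination (-2 * besselJ (v+1) z) * hrec0
  have hKc : Continuous K := by
    apply Continuous.sub
    apply Continuous.sub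
    · exact (besselJ_cont hv).pow 2
    · exact continuous_id.mul ((besselJ_cont (hv1 hv)).pow 2)
    · exact continuous_const.mul ((besselJ_cont hv).mul (besselJ_cont (hv1 hv)))
  have hmono : MonotoneOn K (Set.Icc 0 y) := by
    apply monotoneOn_of_deriv_nonneg (convex_Icc 0 y) hKc.continuousOn
    · exact fun z hz => ((hKd z).differentiableAt).differentiableWithinAt
    · rw [interior_Icc]
      intro z hz
      rw [(hKd z).deriv]
      have ht := turan hv hz.1
      nlinarith
  have hK0 : 0 ≤ K 0 := by
    have h := gamma_succ hv 0
    push_cast at h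
    norm_num at h
    have hΓ := gamma_one_pos hv
    have h1 : (0:ℝ) < v + 1 := by linarith
    simp only [hK, besselJ_zero]
    rw [h]
    have e : (1 / Real.Gamma (v + 1)) ^ 2 - 0 * (1 / ((v+1) * Real.Gamma (v + 1))) ^ 2 -
        (v + 1 / 2) * (1 / Real.Gamma (v + 1) * (1 / ((v+1) * Real.Gamma (v + 1))))
        = (1/2) / ((v+1) * Real.Gamma (v+1)^2) := by
      field_simp
      ring
    rw [e]
    positivity
  rcases eq_or_lt_of_le hy with h|h
  · rw [← h] at *
    have := hK0
    simp only [hK] at this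
    nlinarith [this]
  · have := hmono (Set.mem_Icc.mpr ⟨le_refl 0, hy⟩) (Set.mem_Icc.mpr ⟨hy, le_refl y⟩) hy
    simp only [hK] at this
    nlinarith [hK0, this, hK0.trans this]

lemma polyU {x A : ℝ} (hx : 0 < x) (hA : 1/2 ≤ A) :
    4*(x^3+A*x^2)^2 < (4*A-2)*(2*x^2+(3/2)*x+A^2+A)*(x^3+A*x^2)
      + x^2*(2*x^2+(3/2)*x+A^2+A)^2 := by
  nlinarith [sq_nonneg x, sq_nonneg A, mul_pos hx hx, sq_nonneg (x*A), sq_nonneg (x-A),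
    mul_pos (mul_pos hx hx) hx, sq_nonneg (x+A), mul_nonneg (mul_nonneg hx.le hx.le) hx.le,
    mul_nonneg (mul_nonneg (mul_nonneg hx.le hx.le) hx.le) hx.le, sq_nonneg (A-1/2),
    mul_nonneg (sq_nonneg A) hx.le, mul_nonneg (sq_nonneg x) (by linarith : (0:ℝ) ≤ A - 1/2)]

lemma polyD {x A : ℝ} (hx : 0 < x) (hA : 1/2 ≤ A) :
    0 < (x^3+A*x^2) - A*(2*x^2-(3/2)*x-A^2-A) := by
  have hA0 : 0 < A := by linarith
  nlinarith [mul_nonneg (by linarith : (0:ℝ) ≤ x + A) (sq_nonneg (x-A)),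
    mul_pos (mul_pos hA0 hA0) hx, mul_pos hA0 hx, mul_pos hA0 hA0]

set_option maxHeartbeats 1000000 in
lemma polyL {x A : ℝ} (hx : 0 < x) (hA : 1/2 ≤ A)
    (hc3 : 0 < 2*x^2-(3/2)*x-A^2-A) :
    x^2*(2*x^2-(3/2)*x-A^2-A)^2 <
      (4*A+2)*((x^3+A*x^2) - A*(2*x^2-(3/2)*x-A^2-A))*(2*x^2-(3/2)*x-A^2-A)
      + 4*((x^3+A*x^2) - A*(2*x^2-(3/2)*x-A^2-A))^2 := by
  have hA0 : 0 < A := by linarith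
  set c3 : ℝ := 2*x^2-(3/2)*x-A^2-A with hc3def
  set w2 : ℝ := (3/2)*x^2 + (5/2)*A*x + A^2*x + A^2 + A^3 with hw2def
  have hw2 : 0 < w2 := by positivity
  have key : (4*A+2)*((x^3+A*x^2) - A*c3)*c3 + 4*((x^3+A*x^2) - A*c3)^2 - x^2*c3^2
      = (x - A^2 - A)*c3^2 + (2*x+1)*w2*c3 + w2^2 := by
    rw [hc3def, hw2def]; ring
  have h1 : 2*x*w2*c3 - (A^2+A-x)*(2*x^2)*c3 = (5*x^3+3*A*x^2+2*A^2*x+2*A^3*x)*c3 := by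
    rw [hw2def]; ring
  have h2 : 0 < (5*x^3+3*A*x^2+2*A^2*x+2*A^3*x)*c3 := by positivity
  rcases le_or_gt x (A^2+A) with hcase|hcase
  · -- (A^2+A-x) ≥ 0 : bound (x-A^2-A)*c3^2 ≥ -(A^2+A-x)*2x^2*c3 since c3 ≤ 2x^2
    have hcle : c3 ≤ 2*x^2 := by rw [hc3def]; nlinarith
    have h3 : (A^2+A-x)*c3^2 ≤ (A^2+A-x)*(2*x^2)*c3 := by
      have : (A^2+A-x)*c3 ≥ 0 := mul_nonneg (by linarith) hc3.le
      nlinarith [mul_pos hc3 hc3]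
    nlinarith [mul_pos hw2 hc3, sq_nonneg w2, mul_pos hx (mul_pos hw2 hc3)]
  · -- all terms positive
    have h4 : 0 < (x - A^2 - A)*c3^2 := mul_pos (by linarith) (by positivity)
    nlinarith [mul_pos hw2 hc3, sq_nonneg w2, mul_pos hx (mul_pos hw2 hc3)]

lemma besselI_eq {a x : ℝ} (hx : 0 < x) :
    besselI a x = (x/2) ^ a * besselJ a (x^2/4) := by
  have hx2 : (0:ℝ) < x/2 := by linarith
  rw [besselJ_def, ← tsum_mul_left]
  unfold besselI
  apply tsum_congr
  intro k
  have h1 : 2 * (k:ℝ) + a = ((2*k:ℕ):ℝ) + a := by push_cast; ring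
  rw [h1, Real.rpow_add hx2, Real.rpow_natCast, pow_mul,
    show (x/2)^2 = x^2/4 by ring]
  ring



set_option maxHeartbeats 1000000 in
lemma endgame {a x P Q S : ℝ} (ha : -(1/2) ≤ a) (hx : 0 < x)
    (hP : 0 < P) (hQ : 0 < Q) (hS : 0 < S)
    (hrec : P = (a+1) * Q + (x^2/4) * S)
    (hK : (a+1/2) * (P * Q) + (x^2/4) * Q^2 ≤ P^2)
    (hK1 : (a+1+1/2) * (Q * S) + (x^2/4) * S^2 ≤ Q^2) :
    |2*P - (x + (a+1))*Q| < (3 / (2 * x) + (a + 1) * (a + 2) / x ^ 2) * P := by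
  have hA12 : (1:ℝ)/2 ≤ a + 1 := by linarith
  have hxx : (0:ℝ) < x^2 := by positivity
  have h5 : (x^2/4) * S = P - (a+1) * Q := by linarith [hrec]
  have hgx : (3 / (2 * x) + (a + 1) * (a + 2) / x ^ 2) * P * x^2 = ((3/2)*x + (a+1)^2 + (a+1)) * P := by
    field_simp; ring
  -- subgoal U
  have hU : x^2*(x+(a+1))*Q < (2*x^2+(3/2)*x+(a+1)^2+(a+1))*P := by
    by_contra hcon
    push_neg at hcon
    have hcon' : (2*x^2+(3/2)*x+(a+1)^2+(a+1))*P ≤ (x^3+(a+1)*x^2)*Q := by linarith [hcon]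
    have h4 : (4*(a+1)-2)*(P*Q) + x^2*Q^2 ≤ 4*P^2 := by linarith [hK]
    have h4c : ((x^3+(a+1)*x^2))^2 * ((4*(a+1)-2)*(P*Q) + x^2*Q^2)
        ≤ ((x^3+(a+1)*x^2))^2 * (4*P^2) :=
      mul_le_mul_of_nonneg_left h4 (by positivity)
    have e1 : (4*(a+1)-2)*P*(x^3+(a+1)*x^2)*((2*x^2+(3/2)*x+(a+1)^2+(a+1))*P)
        ≤ (4*(a+1)-2)*P*(x^3+(a+1)*x^2)*((x^3+(a+1)*x^2)*Q) := by
      apply mul_le_mul_of_nonneg_left hcon'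
      have h6 : (0:ℝ) ≤ 4*(a+1)-2 := by linarith
      have h7 : (0:ℝ) ≤ x^3+(a+1)*x^2 := by nlinarith
      positivity
    have e2 : ((2*x^2+(3/2)*x+(a+1)^2+(a+1))*P)^2 ≤ ((x^3+(a+1)*x^2)*Q)^2 := by
      apply pow_le_pow_left₀ _ hcon'
      have h8 : (0:ℝ) < 2*x^2+(3/2)*x+(a+1)^2+(a+1) := by nlinarith
      positivity
    have e2x : x^2*((2*x^2+(3/2)*x+(a+1)^2+(a+1))*P)^2 ≤ x^2*((x^3+(a+1)*x^2)*Q)^2 :=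
      mul_le_mul_of_nonneg_left e2 (by positivity)
    have hpUP : (4*(x^3+(a+1)*x^2)^2) * P^2 < ((4*(a+1)-2)*(2*x^2+(3/2)*x+(a+1)^2+(a+1))*(x^3+(a+1)*x^2)
        + x^2*(2*x^2+(3/2)*x+(a+1)^2+(a+1))^2) * P^2 :=
      mul_lt_mul_of_pos_right (polyU hx hA12) (by positivity)
    linarith [h4c, e1, e2x, hpUP]
  -- subgoal L
  have hL : (2*x^2-(3/2)*x-((a+1)^2+(a+1)))*P < x^2*(x+(a+1))*Q := by
    rcases le_or_gt (2*x^2-(3/2)*x-((a+1)^2+(a+1))) 0 with hc3|hc3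
    · have h9 : (2*x^2-(3/2)*x-((a+1)^2+(a+1)))*P ≤ 0 :=
        mul_nonpos_of_nonpos_of_nonneg hc3 hP.le
      have h10 : 0 < x^2*(x+(a+1))*Q := by
        have : (0:ℝ) < x + (a+1) := by linarith
        positivity
      linarith
    · by_contra hcon
      push_neg at hcon
      have hc3' : (0:ℝ) < 2*x^2-(3/2)*x-(a+1)^2-(a+1) := by linarith
      have hcon' : (x^3+(a+1)*x^2)*Q ≤ (2*x^2-(3/2)*x-(a+1)^2-(a+1))*P := by linarith [hcon]
      have hd := polyD hx hA12
      have hstar : (4*(a+1)+2)*(Q*((x^2/4)*S)) + 4*((x^2/4)*S)^2 ≤ x^2*Q^2 := by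
        nlinarith [hK1]
      have hW : (0:ℝ) < (x^2/4)*S := by positivity
      have hWQ : ((x^3+(a+1)*x^2) - (a+1)*(2*x^2-(3/2)*x-(a+1)^2-(a+1)))*Q ≤
          (2*x^2-(3/2)*x-(a+1)^2-(a+1))*((x^2/4)*S) := by
        rw [h5]
        nlinarith [hcon']
      have hdQ : (0:ℝ) < ((x^3+(a+1)*x^2) - (a+1)*(2*x^2-(3/2)*x-(a+1)^2-(a+1)))*Q :=
        mul_pos hd hQ
      have hstar2 : (2*x^2-(3/2)*x-(a+1)^2-(a+1))^2 * ((4*(a+1)+2)*(Q*((x^2/4)*S)) + 4*((x^2/4)*S)^2)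
          ≤ (2*x^2-(3/2)*x-(a+1)^2-(a+1))^2 * (x^2*Q^2) :=
        mul_le_mul_of_nonneg_left hstar (by positivity)
      have f1 : (4*(a+1)+2)*Q*(2*x^2-(3/2)*x-(a+1)^2-(a+1))*(((x^3+(a+1)*x^2) - (a+1)*(2*x^2-(3/2)*x-(a+1)^2-(a+1)))*Q)
          ≤ (4*(a+1)+2)*Q*(2*x^2-(3/2)*x-(a+1)^2-(a+1))*((2*x^2-(3/2)*x-(a+1)^2-(a+1))*((x^2/4)*S)) := by
        apply mul_le_mul_of_nonneg_left hWQ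
        have h11 : (0:ℝ) ≤ 4*(a+1)+2 := by linarith
        positivity
      have f2 : (((x^3+(a+1)*x^2) - (a+1)*(2*x^2-(3/2)*x-(a+1)^2-(a+1)))*Q)^2
          ≤ ((2*x^2-(3/2)*x-(a+1)^2-(a+1))*((x^2/4)*S))^2 :=
        pow_le_pow_left₀ hdQ.le hWQ 2
      have hpLQ : (x^2*(2*x^2-(3/2)*x-(a+1)^2-(a+1))^2) * Q^2 <
          ((4*(a+1)+2)*((x^3+(a+1)*x^2) - (a+1)*(2*x^2-(3/2)*x-(a+1)^2-(a+1)))*(2*x^2-(3/2)*x-(a+1)^2-(a+1))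
            + 4*((x^3+(a+1)*x^2) - (a+1)*(2*x^2-(3/2)*x-(a+1)^2-(a+1)))^2) * Q^2 :=
        mul_lt_mul_of_pos_right (polyL hx hA12 hc3') (by positivity)
      linarith [hstar2, f1, f2, hpLQ]
  rw [abs_lt]
  constructor
  · apply (mul_lt_mul_iff_left₀ hxx).mp
    calc (-((3 / (2 * x) + (a + 1) * (a + 2) / x ^ 2) * P)) * x^2
        = -(((3/2)*x + (a+1)^2 + (a+1)) * P) := by rw [← hgx]; ring
      _ < (2*P - (x + (a+1))*Q) * x^2 := by nlinarith [hU]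
  · apply (mul_lt_mul_iff_left₀ hxx).mp
    calc (2*P - (x + (a+1))*Q) * x^2 < ((3/2)*x + (a+1)^2 + (a+1)) * P := by
          nlinarith [hL]
      _ = (3 / (2 * x) + (a + 1) * (a + 2) / x ^ 2) * P * x^2 := hgx.symm

/-- Bound on the second difference of consecutive modified Bessel functions of the first kind. -/
theorem stmt2 (a : ℝ) (ha : -(1 / 2) ≤ a) (x : ℝ) (hx : 0 < x) :
    |besselI a x - 2 * besselI (a + 1) x + besselI (a + 2) x| <
      (3 / (2 * x) + (a + 1) * (a + 2) / x ^ 2) * besselI a x := by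
  have ha' : -(1/2) ≤ a := by linarith
  have ha1 : -(1/2) ≤ a + 1 := by linarith
  have ha2 : -(1/2) ≤ a + 2 := by linarith
  have hx2 : (0:ℝ) < x/2 := by linarith
  have hy : (0:ℝ) < x^2/4 := by positivity
  have hP : 0 < besselJ a (x^2/4) := besselJ_pos ha' hy.le
  have hQ : 0 < besselJ (a+1) (x^2/4) := besselJ_pos ha1 hy.le
  have hS : 0 < besselJ (a+2) (x^2/4) := besselJ_pos ha2 hy.le
  have hrec : besselJ a (x^2/4) = (a+1) * besselJ (a+1) (x^2/4) + (x^2/4) * besselJ (a+2) (x^2/4) :=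
    besselJ_rec ha' (x^2/4)
  have hK : (a+1/2) * (besselJ a (x^2/4) * besselJ (a+1) (x^2/4)) + (x^2/4) * (besselJ (a+1) (x^2/4))^2
      ≤ (besselJ a (x^2/4))^2 := besselK_nonneg ha' hy.le
  have hK1 : (a+1+1/2) * (besselJ (a+1) (x^2/4) * besselJ (a+2) (x^2/4)) + (x^2/4) * (besselJ (a+2) (x^2/4))^2
      ≤ (besselJ (a+1) (x^2/4))^2 := by
    have h := besselK_nonneg ha1 hy.le
    rw [show (a:ℝ)+1+1 = a+2 by ring] at h
    exact h
  have hc : 0 < (x/2) ^ a := Real.rpow_pos_of_pos hx2 a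
  have hI0 : besselI a x = (x/2) ^ a * besselJ a (x^2/4) := besselI_eq hx
  have hI1 : besselI (a+1) x = (x/2) ^ a * ((x/2) * besselJ (a+1) (x^2/4)) := by
    rw [besselI_eq hx, Real.rpow_add hx2, Real.rpow_one]; ring
  have h22 : (x/2) ^ ((2:ℝ)) = x^2/4 := by
    rw [show ((2:ℝ)) = ((2:ℕ):ℝ) by norm_num, Real.rpow_natCast]
    push_cast
    ring
  have hI2 : besselI (a+2) x = (x/2) ^ a * ((x^2/4) * besselJ (a+2) (x^2/4)) := by
    rw [besselI_eq hx, Real.rpow_add hx2, h22]; ring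
  rw [hI0, hI1, hI2]
  have h5 : (x^2/4) * besselJ (a+2) (x^2/4) = besselJ a (x^2/4) - (a+1) * besselJ (a+1) (x^2/4) := by
    linarith [hrec]
  have hE : (x/2) ^ a * besselJ a (x^2/4) - 2 * ((x/2) ^ a * ((x/2) * besselJ (a+1) (x^2/4)))
      + (x/2) ^ a * ((x^2/4) * besselJ (a+2) (x^2/4))
      = (x/2) ^ a * (2*besselJ a (x^2/4) - (x + (a+1))*besselJ (a+1) (x^2/4)) := by
    rw [h5]; ring
  rw [hE, abs_mul, abs_of_pos hc]
  calc (x/2) ^ a * |2*besselJ a (x^2/4) - (x + (a+1))*besselJ (a+1) (x^2/4)|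
      < (x/2) ^ a * ((3 / (2 * x) + (a + 1) * (a + 2) / x ^ 2) * besselJ a (x^2/4)) :=
        (mul_lt_mul_iff_right₀ hc).mpr (endgame ha' hx hP hQ hS hrec hK hK1)
    _ = (3 / (2 * x) + (a + 1) * (a + 2) / x ^ 2) * ((x/2) ^ a * besselJ a (x^2/4)) := by ring
end

section
/- There exists a constant C > 0 such that for every real a ≥ −1/2 and every x > 0, the inequality |I_a(x) − 3·I_{a+1}(x) + 3·I_{a+2}(x) − I_{a+3}(x)| ≤ C · ( (a+2)/x² + (a+1)(a+2)(a+3)/x³ ) · I_a(x) holds. -/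
set_option maxHeartbeats 4000000
set_option maxRecDepth 8000


namespace BesselAux



noncomputable def bt (a x : ℝ) (k : ℕ) : ℝ :=
  (x / 2) ^ (2 * (k : ℝ) + a) / ((Nat.factorial k : ℝ) * Real.Gamma (a + (k : ℝ) + 1))

lemma besselI_eq (a x : ℝ) : besselI a x = ∑' k : ℕ, bt a x k := rfl

lemma bt_pos {a x : ℝ} (ha : -1 < a) (hx : 0 < x) (k : ℕ) : 0 < bt a x k := by
  have h2 : (0:ℝ) < x / 2 := by linarith
  have hknn : (0:ℝ) ≤ (k:ℝ) := Nat.cast_nonneg k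
  have hg : 0 < Real.Gamma (a + (k:ℝ) + 1) := Real.Gamma_pos_of_pos (by linarith)
  have hf : (0:ℝ) < (Nat.factorial k : ℝ) := by exact_mod_cast Nat.factorial_pos k
  exact div_pos (Real.rpow_pos_of_pos h2 _) (mul_pos hf hg)

lemma bt_succ {a x : ℝ} (ha : -1 < a) (hx : 0 < x) (k : ℕ) :
    bt a x (k + 1) = bt a x k * ((x/2)^(2:ℝ) / (((k:ℝ)+1) * (a + (k:ℝ) + 1))) := by
  have h2 : (0:ℝ) < x / 2 := by linarith
  have hknn : (0:ℝ) ≤ (k:ℝ) := Nat.cast_nonneg k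
  have hak : (0:ℝ) < a + (k:ℝ) + 1 := by linarith
  have hg : 0 < Real.Gamma (a + (k:ℝ) + 1) := Real.Gamma_pos_of_pos hak
  have hf : (0:ℝ) < (Nat.factorial k : ℝ) := by exact_mod_cast Nat.factorial_pos k
  have hrp : (0:ℝ) < (x/2) ^ (2*(k:ℝ)+a) := Real.rpow_pos_of_pos h2 _
  unfold bt
  push_cast [Nat.factorial_succ]
  rw [show 2 * ((k:ℝ)+1) + a = (2*(k:ℝ)+a) + (2:ℝ) by ring,
      Real.rpow_add h2,
      show a + ((k:ℝ)+1) + 1 = (a + (k:ℝ) + 1) + 1 by ring,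
      Real.Gamma_add_one (ne_of_gt hak)]
  field_simp

lemma summable_bt {a x : ℝ} (ha : -1 < a) (hx : 0 < x) : Summable (bt a x) := by
  apply summable_of_ratio_norm_eventually_le (r := 1/2) (by norm_num)
  obtain ⟨N, hN⟩ := exists_nat_ge (max ((x/2)^(2:ℝ) * 2) (-a))
  filter_upwards [Filter.eventually_ge_atTop N] with k hk
  have hkN : ((N:ℝ)) ≤ (k:ℝ) := by exact_mod_cast hk
  have h1 : (x/2)^(2:ℝ) * 2 ≤ (k:ℝ) := le_trans (le_trans (le_max_left _ _) hN) hkN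
  have h2 : -a ≤ (k:ℝ) := le_trans (le_trans (le_max_right _ _) hN) hkN
  have hak : (1:ℝ) ≤ a + (k:ℝ) + 1 := by linarith
  have hknn : (0:ℝ) ≤ (k:ℝ) := Nat.cast_nonneg k
  have hr2 : (0:ℝ) < (x/2)^(2:ℝ) := Real.rpow_pos_of_pos (by linarith) _
  have hden : (0:ℝ) < ((k:ℝ)+1) * (a + (k:ℝ) + 1) := by nlinarith
  have hratio : (x/2)^(2:ℝ) / (((k:ℝ)+1) * (a + (k:ℝ) + 1)) ≤ 1/2 := by
    rw [div_le_iff₀ hden]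
    nlinarith
  have hpos1 := bt_pos ha hx k
  have hpos2 := bt_pos ha hx (k+1)
  rw [Real.norm_eq_abs, Real.norm_eq_abs, abs_of_pos hpos1, abs_of_pos hpos2,
      bt_succ ha hx k]
  have := mul_le_mul_of_nonneg_left hratio (le_of_lt hpos1)
  linarith

lemma besselI_pos {a x : ℝ} (ha : -1 < a) (hx : 0 < x) : 0 < besselI a x := by
  rw [besselI_eq]
  exact Summable.tsum_pos (summable_bt ha hx) (fun k => (bt_pos ha hx k).le) 0 (bt_pos ha hx 0)

lemma bt_rec {a x : ℝ} (ha : -1 < a) (hx : 0 < x) (k : ℕ) :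
    x * bt a x (k+1) - 2*(a+1) * bt (a+1) x (k+1) = x * bt (a+2) x k := by
  have h2 : (0:ℝ) < x/2 := by linarith
  have hknn : (0:ℝ) ≤ (k:ℝ) := Nat.cast_nonneg k
  have hak2 : (0:ℝ) < a + (k:ℝ) + 2 := by linarith
  have hg1 : 0 < Real.Gamma (a + (k:ℝ) + 2) := Real.Gamma_pos_of_pos hak2
  have hf : (0:ℝ) < (Nat.factorial k : ℝ) := by exact_mod_cast Nat.factorial_pos k
  have hrp : (0:ℝ) < (x/2) ^ (2*(k:ℝ)+(a+2)) := Real.rpow_pos_of_pos h2 _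
  unfold bt
  push_cast [Nat.factorial_succ]
  rw [show 2 * ((k:ℝ)+1) + a = 2*(k:ℝ)+(a+2) by ring,
      show 2 * ((k:ℝ)+1) + (a+1) = (2*(k:ℝ)+(a+2)) + 1 by ring,
      Real.rpow_add h2 _ 1, Real.rpow_one,
      show a + 1 + ((k:ℝ)+1) + 1 = (a + (k:ℝ) + 2) + 1 by ring,
      show a + ((k:ℝ)+1) + 1 = a + (k:ℝ) + 2 by ring,
      show a + 2 + (k:ℝ) + 1 = (a + (k:ℝ) + 2) + 1 by ring,
      Real.Gamma_add_one (ne_of_gt hak2)]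
  field_simp
  ring

lemma bt_rec_zero {a x : ℝ} (ha : -1 < a) (hx : 0 < x) :
    x * bt a x 0 - 2*(a+1) * bt (a+1) x 0 = 0 := by
  have h2 : (0:ℝ) < x/2 := by linarith
  have ha1 : (0:ℝ) < a + 1 := by linarith
  have hg : 0 < Real.Gamma (a + 1) := Real.Gamma_pos_of_pos ha1
  unfold bt
  simp only [Nat.cast_zero, Nat.factorial_zero, Nat.cast_one]
  rw [show 2 * (0:ℝ) + (a+1) = (2*(0:ℝ) + a) + 1 by ring,
      Real.rpow_add h2 _ 1, Real.rpow_one,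
      show a + 1 + (0:ℝ) + 1 = (a + (0:ℝ) + 1) + 1 by ring,
      show a + (0:ℝ) + 1 = a + 1 by ring,
      Real.Gamma_add_one (ne_of_gt ha1)]
  field_simp
  ring

lemma besselI_recurrence {a x : ℝ} (ha : -1 < a) (hx : 0 < x) :
    x * besselI a x = 2*(a+1) * besselI (a+1) x + x * besselI (a+2) x := by
  have ha1 : -1 < a + 1 := by linarith
  have ha2 : -1 < a + 2 := by linarith
  have s0 := summable_bt ha hx
  have s1 := summable_bt ha1 hx
  have s2 := summable_bt ha2 hx
  have hphi : Summable (fun k => x * bt a x k - 2*(a+1) * bt (a+1) x k) :=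
    (s0.mul_left x).sub (s1.mul_left (2*(a+1)))
  have key : ∑' k, (x * bt a x k - 2*(a+1) * bt (a+1) x k) = x * ∑' k, bt (a+2) x k := by
    rw [Summable.tsum_eq_zero_add hphi, bt_rec_zero ha hx, zero_add]
    rw [show (fun k => x * bt a x (k+1) - 2*(a+1) * bt (a+1) x (k+1))
          = (fun k => x * bt (a+2) x k) from funext (fun k => bt_rec ha hx k)]
    exact tsum_mul_left
  have hsplit : ∑' k, (x * bt a x k - 2*(a+1) * bt (a+1) x k)
      = x * ∑' k, bt a x k - 2*(a+1) * ∑' k, bt (a+1) x k := by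
    rw [Summable.tsum_sub (s0.mul_left x) (s1.mul_left (2*(a+1))), tsum_mul_left, tsum_mul_left]
  rw [besselI_eq, besselI_eq, besselI_eq]
  have := key
  rw [hsplit] at this
  linarith

noncomputable def rr (x b : ℝ) : ℝ := besselI (b+1) x / besselI b x

lemma rr_pos {x b : ℝ} (hb : -1 < b) (hx : 0 < x) : 0 < rr x b :=
  div_pos (besselI_pos (by linarith) hx) (besselI_pos hb hx)

lemma rr_rec {x b : ℝ} (hb : -1 < b) (hx : 0 < x) :
    rr x b * (2*(b+1) + x * rr x (b+1)) = x := by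
  have h0 := besselI_pos hb hx
  have h1 := besselI_pos (show (-1:ℝ) < b+1 by linarith) hx
  have hrec := besselI_recurrence hb hx
  unfold rr
  rw [show b+1+1 = b+2 by ring]
  field_simp
  nlinarith [hrec, h0, h1]

lemma rr_upper {x b : ℝ} (hb : -1 < b) (hx : 0 < x) :
    2*(b+1) * rr x b ≤ x := by
  have h1 := rr_pos hb hx
  have h2 := rr_pos (show (-1:ℝ) < b+1 by linarith) hx
  nlinarith [rr_rec hb hx, mul_pos (mul_pos hx h1) h2]


-- polynomial scaffolding
def mN (c x : ℝ) : ℝ := 8*x^2 - 4*x*(2*c+1) + (4*c^2 - 1)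
def wN (c x : ℝ) : ℝ := 600*x^2 + 16*(c+2)^2*x + (c+2)^4
def loN (c x : ℝ) : ℝ := x^2 * mN c x - 8 * wN c x
def hiN (c x : ℝ) : ℝ := x^2 * mN c x + 8 * wN c x
def N2p (c x : ℝ) : ℝ := 16*(c+2)*x^4 + x * hiN (c+2) x
def N2m (c x : ℝ) : ℝ := 16*(c+2)*x^4 + x * loN (c+2) x
def N1p (c x : ℝ) : ℝ := 2*(c+1)*(N2p c x) + 8*x^6
def N1m (c x : ℝ) : ℝ := 2*(c+1)*(N2m c x) + 8*x^6

lemma keyUp (c x : ℝ) (hd : -(1/2:ℝ) ≤ c) (hy : (1500:ℝ) ≤ x) :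
    8*x^5 * N2p c x ≤ hiN c x * N1p c x := by
  have hA : (0:ℝ) ≤ c + 1/2 := by linarith
  have hB : (0:ℝ) ≤ x - 1500 := by linarith
  simp only [N1p, N2p, hiN, wN, mN]
  linarith [mul_nonneg (pow_nonneg hA 0) (pow_nonneg hB 0),
    mul_nonneg (pow_nonneg hA 0) (pow_nonneg hB 1),
    mul_nonneg (pow_nonneg hA 0) (pow_nonneg hB 2),
    mul_nonneg (pow_nonneg hA 0) (pow_nonneg hB 3),
    mul_nonneg (pow_nonneg hA 0) (pow_nonneg hB 4),
    mul_nonneg (pow_nonneg hA 0) (pow_nonneg hB 5),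
    mul_nonneg (pow_nonneg hA 0) (pow_nonneg hB 6),
    mul_nonneg (pow_nonneg hA 0) (pow_nonneg hB 7),
    mul_nonneg (pow_nonneg hA 1) (pow_nonneg hB 0),
    mul_nonneg (pow_nonneg hA 1) (pow_nonneg hB 1),
    mul_nonneg (pow_nonneg hA 1) (pow_nonneg hB 2),
    mul_nonneg (pow_nonneg hA 1) (pow_nonneg hB 3),
    mul_nonneg (pow_nonneg hA 1) (pow_nonneg hB 4),
    mul_nonneg (pow_nonneg hA 1) (pow_nonneg hB 5),
    mul_nonneg (pow_nonneg hA 1) (pow_nonneg hB 6),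
    mul_nonneg (pow_nonneg hA 1) (pow_nonneg hB 7),
    mul_nonneg (pow_nonneg hA 2) (pow_nonneg hB 0),
    mul_nonneg (pow_nonneg hA 2) (pow_nonneg hB 1),
    mul_nonneg (pow_nonneg hA 2) (pow_nonneg hB 2),
    mul_nonneg (pow_nonneg hA 2) (pow_nonneg hB 3),
    mul_nonneg (pow_nonneg hA 2) (pow_nonneg hB 4),
    mul_nonneg (pow_nonneg hA 2) (pow_nonneg hB 5),
    mul_nonneg (pow_nonneg hA 2) (pow_nonneg hB 6),
    mul_nonneg (pow_nonneg hA 3) (pow_nonneg hB 0),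
    mul_nonneg (pow_nonneg hA 3) (pow_nonneg hB 1),
    mul_nonneg (pow_nonneg hA 3) (pow_nonneg hB 2),
    mul_nonneg (pow_nonneg hA 3) (pow_nonneg hB 3),
    mul_nonneg (pow_nonneg hA 3) (pow_nonneg hB 4),
    mul_nonneg (pow_nonneg hA 3) (pow_nonneg hB 5),
    mul_nonneg (pow_nonneg hA 3) (pow_nonneg hB 6),
    mul_nonneg (pow_nonneg hA 4) (pow_nonneg hB 0),
    mul_nonneg (pow_nonneg hA 4) (pow_nonneg hB 1),
    mul_nonneg (pow_nonneg hA 4) (pow_nonneg hB 2),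
    mul_nonneg (pow_nonneg hA 4) (pow_nonneg hB 3),
    mul_nonneg (pow_nonneg hA 4) (pow_nonneg hB 4),
    mul_nonneg (pow_nonneg hA 4) (pow_nonneg hB 5),
    mul_nonneg (pow_nonneg hA 5) (pow_nonneg hB 0),
    mul_nonneg (pow_nonneg hA 5) (pow_nonneg hB 1),
    mul_nonneg (pow_nonneg hA 5) (pow_nonneg hB 2),
    mul_nonneg (pow_nonneg hA 5) (pow_nonneg hB 3),
    mul_nonneg (pow_nonneg hA 5) (pow_nonneg hB 4),
    mul_nonneg (pow_nonneg hA 5) (pow_nonneg hB 5),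
    mul_nonneg (pow_nonneg hA 6) (pow_nonneg hB 0),
    mul_nonneg (pow_nonneg hA 6) (pow_nonneg hB 1),
    mul_nonneg (pow_nonneg hA 6) (pow_nonneg hB 2),
    mul_nonneg (pow_nonneg hA 6) (pow_nonneg hB 3),
    mul_nonneg (pow_nonneg hA 7) (pow_nonneg hB 0),
    mul_nonneg (pow_nonneg hA 7) (pow_nonneg hB 1),
    mul_nonneg (pow_nonneg hA 7) (pow_nonneg hB 2),
    mul_nonneg (pow_nonneg hA 7) (pow_nonneg hB 3),
    mul_nonneg (pow_nonneg hA 8) (pow_nonneg hB 0),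
    mul_nonneg (pow_nonneg hA 8) (pow_nonneg hB 1),
    mul_nonneg (pow_nonneg hA 9) (pow_nonneg hB 0),
    mul_nonneg (pow_nonneg hA 9) (pow_nonneg hB 1)]

lemma keyLo (c x : ℝ) (hd : -(1/2:ℝ) ≤ c) (hy : (1500:ℝ) ≤ x) (hl : 4*c ≤ 5*x) :
    loN c x * N1m c x ≤ 8*x^5 * N2m c x := by
  have hA : (0:ℝ) ≤ c + 1/2 := by linarith
  have hB : (0:ℝ) ≤ x - 1500 := by linarith
  have hL : (0:ℝ) ≤ 5*x/4 - c := by linarith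
  simp only [N1m, N2m, loN, hiN, wN, mN]
  linarith [mul_nonneg (pow_nonneg hA 0) (pow_nonneg hB 0),
    mul_nonneg (pow_nonneg hA 0) (pow_nonneg hB 1),
    mul_nonneg (pow_nonneg hA 0) (pow_nonneg hB 2),
    mul_nonneg (pow_nonneg hA 0) (pow_nonneg hB 3),
    mul_nonneg (pow_nonneg hA 0) (pow_nonneg hB 4),
    mul_nonneg (pow_nonneg hA 0) (pow_nonneg hB 5),
    mul_nonneg (pow_nonneg hA 0) (pow_nonneg hB 6),
    mul_nonneg (pow_nonneg hA 0) (pow_nonneg hB 7),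
    mul_nonneg (pow_nonneg hA 1) (pow_nonneg hB 0),
    mul_nonneg (pow_nonneg hA 1) (pow_nonneg hB 1),
    mul_nonneg (pow_nonneg hA 1) (pow_nonneg hB 2),
    mul_nonneg (pow_nonneg hA 1) (pow_nonneg hB 3),
    mul_nonneg (pow_nonneg hA 1) (pow_nonneg hB 4),
    mul_nonneg (pow_nonneg hA 1) (pow_nonneg hB 5),
    mul_nonneg (pow_nonneg hA 1) (pow_nonneg hB 6),
    mul_nonneg (pow_nonneg hA 1) (pow_nonneg hB 7),
    mul_nonneg (pow_nonneg hA 2) (pow_nonneg hB 0),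
    mul_nonneg (pow_nonneg hA 2) (pow_nonneg hB 1),
    mul_nonneg (pow_nonneg hA 2) (pow_nonneg hB 2),
    mul_nonneg (pow_nonneg hA 2) (pow_nonneg hB 3),
    mul_nonneg (pow_nonneg hA 2) (pow_nonneg hB 4),
    mul_nonneg (pow_nonneg hA 2) (pow_nonneg hB 5),
    mul_nonneg (pow_nonneg hA 2) (pow_nonneg hB 6),
    mul_nonneg (pow_nonneg hA 3) (pow_nonneg hB 0),
    mul_nonneg (pow_nonneg hA 3) (pow_nonneg hB 1),
    mul_nonneg (pow_nonneg hA 3) (pow_nonneg hB 2),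
    mul_nonneg (pow_nonneg hA 3) (pow_nonneg hB 3),
    mul_nonneg (pow_nonneg hA 3) (pow_nonneg hB 4),
    mul_nonneg (pow_nonneg hA 3) (pow_nonneg hB 5),
    mul_nonneg (pow_nonneg hA 3) (pow_nonneg hB 6),
    mul_nonneg (pow_nonneg hA 4) (pow_nonneg hB 0),
    mul_nonneg (pow_nonneg hA 4) (pow_nonneg hB 1),
    mul_nonneg (pow_nonneg hA 4) (pow_nonneg hB 2),
    mul_nonneg (pow_nonneg hA 4) (pow_nonneg hB 3),
    mul_nonneg (pow_nonneg hA 4) (pow_nonneg hB 4),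
    mul_nonneg (pow_nonneg hA 4) (pow_nonneg hB 5),
    mul_nonneg (pow_nonneg hA 5) (pow_nonneg hB 0),
    mul_nonneg (pow_nonneg hA 5) (pow_nonneg hB 1),
    mul_nonneg (pow_nonneg hA 5) (pow_nonneg hB 2),
    mul_nonneg (pow_nonneg hA 5) (pow_nonneg hB 3),
    mul_nonneg (pow_nonneg hA 5) (pow_nonneg hB 4),
    mul_nonneg (pow_nonneg hA 5) (pow_nonneg hB 5),
    mul_nonneg (mul_nonneg (pow_nonneg hA 5) (pow_nonneg hB 0)) hL,
    mul_nonneg (mul_nonneg (pow_nonneg hA 5) (pow_nonneg hB 1)) hL,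
    mul_nonneg (mul_nonneg (pow_nonneg hA 5) (pow_nonneg hB 2)) hL,
    mul_nonneg (mul_nonneg (pow_nonneg hA 5) (pow_nonneg hB 3)) hL,
    mul_nonneg (mul_nonneg (pow_nonneg hA 5) (pow_nonneg hB 4)) hL,
    mul_nonneg (mul_nonneg (pow_nonneg hA 6) (pow_nonneg hB 0)) hL,
    mul_nonneg (mul_nonneg (pow_nonneg hA 6) (pow_nonneg hB 1)) hL,
    mul_nonneg (mul_nonneg (pow_nonneg hA 6) (pow_nonneg hB 2)) hL,
    mul_nonneg (mul_nonneg (pow_nonneg hA 6) (pow_nonneg hB 3)) hL,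
    mul_nonneg (mul_nonneg (pow_nonneg hA 7) (pow_nonneg hB 0)) hL,
    mul_nonneg (mul_nonneg (pow_nonneg hA 7) (pow_nonneg hB 1)) hL,
    mul_nonneg (mul_nonneg (pow_nonneg hA 7) (pow_nonneg hB 2)) hL,
    mul_nonneg (mul_nonneg (pow_nonneg hA 8) (pow_nonneg hB 0)) hL,
    mul_nonneg (mul_nonneg (pow_nonneg hA 8) (pow_nonneg hB 1)) hL]

lemma keyG0 (c x : ℝ) (hd : -(1/2:ℝ) ≤ c) (hy : (1500:ℝ) ≤ x) (hb : 7*x ≤ 10*c) :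
    loN c x * (4*(c+1)*(c+2) + x^2) ≤ 16*x^5*(c+2) := by
  have hA : (0:ℝ) ≤ c + 1/2 := by linarith
  have hB : (0:ℝ) ≤ x - 1500 := by linarith
  have hW : (0:ℝ) ≤ c - 7*x/10 := by linarith
  simp only [loN, wN, mN]
  linarith [mul_nonneg (pow_nonneg hW 0) (pow_nonneg hB 0),
    mul_nonneg (pow_nonneg hW 0) (pow_nonneg hB 1),
    mul_nonneg (pow_nonneg hW 0) (pow_nonneg hB 2),
    mul_nonneg (pow_nonneg hW 0) (pow_nonneg hB 3),
    mul_nonneg (pow_nonneg hW 0) (pow_nonneg hB 4),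
    mul_nonneg (pow_nonneg hW 0) (pow_nonneg hB 5),
    mul_nonneg (pow_nonneg hW 0) (pow_nonneg hB 6),
    mul_nonneg (pow_nonneg hW 1) (pow_nonneg hB 0),
    mul_nonneg (pow_nonneg hW 1) (pow_nonneg hB 1),
    mul_nonneg (pow_nonneg hW 1) (pow_nonneg hB 2),
    mul_nonneg (pow_nonneg hW 1) (pow_nonneg hB 3),
    mul_nonneg (pow_nonneg hW 1) (pow_nonneg hB 4),
    mul_nonneg (pow_nonneg hW 1) (pow_nonneg hB 5),
    mul_nonneg (pow_nonneg hW 2) (pow_nonneg hB 0),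
    mul_nonneg (pow_nonneg hW 2) (pow_nonneg hB 1),
    mul_nonneg (pow_nonneg hW 2) (pow_nonneg hB 2),
    mul_nonneg (pow_nonneg hW 2) (pow_nonneg hB 3),
    mul_nonneg (pow_nonneg hW 2) (pow_nonneg hB 4),
    mul_nonneg (pow_nonneg hW 3) (pow_nonneg hB 0),
    mul_nonneg (pow_nonneg hW 3) (pow_nonneg hB 1),
    mul_nonneg (pow_nonneg hW 3) (pow_nonneg hB 2),
    mul_nonneg (pow_nonneg hW 3) (pow_nonneg hB 3),
    mul_nonneg (pow_nonneg hW 4) (pow_nonneg hB 0),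
    mul_nonneg (pow_nonneg hW 4) (pow_nonneg hB 1),
    mul_nonneg (pow_nonneg hW 4) (pow_nonneg hB 2),
    mul_nonneg (pow_nonneg hW 5) (pow_nonneg hB 0),
    mul_nonneg (pow_nonneg hW 5) (pow_nonneg hB 1),
    mul_nonneg (pow_nonneg hW 6) (pow_nonneg hB 0)]

lemma gA (c x : ℝ) (hd : -(1/2:ℝ) ≤ c) (hy : (1500:ℝ) ≤ x) (h : 5*x ≤ 4*c) :
    loN (c+2) x < 0 := by
  have hA : (0:ℝ) ≤ c + 1/2 := by linarith
  have hB : (0:ℝ) ≤ x - 1500 := by linarith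
  have hW : (0:ℝ) ≤ c - 5*x/4 := by linarith
  simp only [loN, wN, mN]
  linarith [mul_nonneg (pow_nonneg hW 0) (pow_nonneg hB 0),
    mul_nonneg (pow_nonneg hW 0) (pow_nonneg hB 1),
    mul_nonneg (pow_nonneg hW 0) (pow_nonneg hB 2),
    mul_nonneg (pow_nonneg hW 0) (pow_nonneg hB 3),
    mul_nonneg (pow_nonneg hW 0) (pow_nonneg hB 4),
    mul_nonneg (pow_nonneg hW 1) (pow_nonneg hB 0),
    mul_nonneg (pow_nonneg hW 1) (pow_nonneg hB 1),
    mul_nonneg (pow_nonneg hW 1) (pow_nonneg hB 2),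
    mul_nonneg (pow_nonneg hW 1) (pow_nonneg hB 3),
    mul_nonneg (pow_nonneg hW 2) (pow_nonneg hB 0),
    mul_nonneg (pow_nonneg hW 2) (pow_nonneg hB 1),
    mul_nonneg (pow_nonneg hW 2) (pow_nonneg hB 2),
    mul_nonneg (pow_nonneg hW 3) (pow_nonneg hB 0),
    mul_nonneg (pow_nonneg hW 3) (pow_nonneg hB 1),
    mul_nonneg (pow_nonneg hW 4) (pow_nonneg hB 0)]

lemma gB (c x : ℝ) (hd : -(1/2:ℝ) ≤ c) (hy : (1500:ℝ) ≤ x) (h : 10*c ≤ 7*x) :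
    0 ≤ loN (c+2) x := by
  have hA : (0:ℝ) ≤ c + 1/2 := by linarith
  have hB : (0:ℝ) ≤ x - 1500 := by linarith
  have hW : (0:ℝ) ≤ 7*x/10 - c := by linarith
  simp only [loN, wN, mN]
  linarith [mul_nonneg (pow_nonneg hW 0) (pow_nonneg hB 0),
    mul_nonneg (pow_nonneg hW 0) (pow_nonneg hB 1),
    mul_nonneg (pow_nonneg hW 0) (pow_nonneg hB 2),
    mul_nonneg (pow_nonneg hW 0) (pow_nonneg hB 3),
    mul_nonneg (pow_nonneg hW 0) (pow_nonneg hB 4),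
    mul_nonneg (pow_nonneg hW 3) (pow_nonneg hB 0),
    mul_nonneg (pow_nonneg hW 3) (pow_nonneg hB 1),
    mul_nonneg (mul_nonneg (pow_nonneg hW 0) (pow_nonneg hB 0)) hA,
    mul_nonneg (mul_nonneg (pow_nonneg hW 0) (pow_nonneg hB 1)) hA,
    mul_nonneg (mul_nonneg (pow_nonneg hW 0) (pow_nonneg hB 2)) hA,
    mul_nonneg (mul_nonneg (pow_nonneg hW 0) (pow_nonneg hB 3)) hA,
    mul_nonneg (mul_nonneg (pow_nonneg hW 1) (pow_nonneg hB 0)) hA,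
    mul_nonneg (mul_nonneg (pow_nonneg hW 1) (pow_nonneg hB 1)) hA,
    mul_nonneg (mul_nonneg (pow_nonneg hW 1) (pow_nonneg hB 2)) hA,
    mul_nonneg (mul_nonneg (pow_nonneg hW 3) (pow_nonneg hB 0)) hA]

lemma keyMplus (a x : ℝ) (ha : -(1/2:ℝ) ≤ a) (hax : 1000*(a+2) ≤ x) :
    -(4096*((a+2)*x^4 + (a+2)^3*x^3)) ≤ (512*x^6 - 192*(mN a x)*x^4 + 24*(mN a x)*(mN (a+1) x)*x^2 - (mN a x)*(mN (a+1) x)*(mN (a+2) x)) := by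
  have hA : (0:ℝ) ≤ a + 1/2 := by linarith
  have hB : (0:ℝ) ≤ x - 1000*a - 2000 := by linarith
  simp only [mN]
  linarith [mul_nonneg (pow_nonneg hA 0) (pow_nonneg hB 0),
    mul_nonneg (pow_nonneg hA 0) (pow_nonneg hB 1),
    mul_nonneg (pow_nonneg hA 0) (pow_nonneg hB 2),
    mul_nonneg (pow_nonneg hA 0) (pow_nonneg hB 3),
    mul_nonneg (pow_nonneg hA 0) (pow_nonneg hB 4),
    mul_nonneg (pow_nonneg hA 1) (pow_nonneg hB 0),
    mul_nonneg (pow_nonneg hA 1) (pow_nonneg hB 1),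
    mul_nonneg (pow_nonneg hA 1) (pow_nonneg hB 2),
    mul_nonneg (pow_nonneg hA 1) (pow_nonneg hB 3),
    mul_nonneg (pow_nonneg hA 1) (pow_nonneg hB 4),
    mul_nonneg (pow_nonneg hA 2) (pow_nonneg hB 0),
    mul_nonneg (pow_nonneg hA 2) (pow_nonneg hB 1),
    mul_nonneg (pow_nonneg hA 2) (pow_nonneg hB 2),
    mul_nonneg (pow_nonneg hA 2) (pow_nonneg hB 3),
    mul_nonneg (pow_nonneg hA 3) (pow_nonneg hB 0),
    mul_nonneg (pow_nonneg hA 3) (pow_nonneg hB 1),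
    mul_nonneg (pow_nonneg hA 3) (pow_nonneg hB 2),
    mul_nonneg (pow_nonneg hA 3) (pow_nonneg hB 3),
    mul_nonneg (pow_nonneg hA 4) (pow_nonneg hB 0),
    mul_nonneg (pow_nonneg hA 4) (pow_nonneg hB 1),
    mul_nonneg (pow_nonneg hA 4) (pow_nonneg hB 2),
    mul_nonneg (pow_nonneg hA 5) (pow_nonneg hB 0),
    mul_nonneg (pow_nonneg hA 5) (pow_nonneg hB 1),
    mul_nonneg (pow_nonneg hA 6) (pow_nonneg hB 0)]

lemma keyMminus (a x : ℝ) (ha : -(1/2:ℝ) ≤ a) (hax : 1000*(a+2) ≤ x) :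
    (512*x^6 - 192*(mN a x)*x^4 + 24*(mN a x)*(mN (a+1) x)*x^2 - (mN a x)*(mN (a+1) x)*(mN (a+2) x)) ≤ (4096*((a+2)*x^4 + (a+2)^3*x^3)) := by
  have hA : (0:ℝ) ≤ a + 1/2 := by linarith
  have hB : (0:ℝ) ≤ x - 1000*a - 2000 := by linarith
  simp only [mN]
  linarith [mul_nonneg (pow_nonneg hA 0) (pow_nonneg hB 0),
    mul_nonneg (pow_nonneg hA 0) (pow_nonneg hB 1),
    mul_nonneg (pow_nonneg hA 0) (pow_nonneg hB 2),
    mul_nonneg (pow_nonneg hA 0) (pow_nonneg hB 3),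
    mul_nonneg (pow_nonneg hA 0) (pow_nonneg hB 4),
    mul_nonneg (pow_nonneg hA 1) (pow_nonneg hB 0),
    mul_nonneg (pow_nonneg hA 1) (pow_nonneg hB 1),
    mul_nonneg (pow_nonneg hA 1) (pow_nonneg hB 2),
    mul_nonneg (pow_nonneg hA 1) (pow_nonneg hB 3),
    mul_nonneg (pow_nonneg hA 1) (pow_nonneg hB 4),
    mul_nonneg (pow_nonneg hA 2) (pow_nonneg hB 0),
    mul_nonneg (pow_nonneg hA 2) (pow_nonneg hB 1),
    mul_nonneg (pow_nonneg hA 2) (pow_nonneg hB 2),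
    mul_nonneg (pow_nonneg hA 2) (pow_nonneg hB 3),
    mul_nonneg (pow_nonneg hA 3) (pow_nonneg hB 0),
    mul_nonneg (pow_nonneg hA 3) (pow_nonneg hB 1),
    mul_nonneg (pow_nonneg hA 3) (pow_nonneg hB 2),
    mul_nonneg (pow_nonneg hA 3) (pow_nonneg hB 3),
    mul_nonneg (pow_nonneg hA 4) (pow_nonneg hB 0),
    mul_nonneg (pow_nonneg hA 4) (pow_nonneg hB 1),
    mul_nonneg (pow_nonneg hA 4) (pow_nonneg hB 2),
    mul_nonneg (pow_nonneg hA 5) (pow_nonneg hB 0),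
    mul_nonneg (pow_nonneg hA 5) (pow_nonneg hB 1),
    mul_nonneg (pow_nonneg hA 6) (pow_nonneg hB 0)]

lemma keyWB0 (a x : ℝ) (ha : -(1/2:ℝ) ≤ a) (hax : 1000*(a+2) ≤ x) :
    wN a x ≤ 400*((a+2)*x^2 + (a+2)^3*x) := by
  have hA : (0:ℝ) ≤ a + 1/2 := by linarith
  have hB : (0:ℝ) ≤ x - 1000*a - 2000 := by linarith
  simp only [wN]
  linarith [mul_nonneg (pow_nonneg hA 0) (pow_nonneg hB 0),
    mul_nonneg (pow_nonneg hA 0) (pow_nonneg hB 1),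
    mul_nonneg (pow_nonneg hA 1) (pow_nonneg hB 0),
    mul_nonneg (pow_nonneg hA 1) (pow_nonneg hB 1),
    mul_nonneg (pow_nonneg hA 1) (pow_nonneg hB 2),
    mul_nonneg (pow_nonneg hA 2) (pow_nonneg hB 0),
    mul_nonneg (pow_nonneg hA 2) (pow_nonneg hB 1),
    mul_nonneg (pow_nonneg hA 3) (pow_nonneg hB 0),
    mul_nonneg (pow_nonneg hA 3) (pow_nonneg hB 1),
    mul_nonneg (pow_nonneg hA 4) (pow_nonneg hB 0)]

lemma keyUB0 (a x : ℝ) (ha : -(1/2:ℝ) ≤ a) (hax : 1000*(a+2) ≤ x) :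
    8 * wN a x ≤ 12*x^4 := by
  have hA : (0:ℝ) ≤ a + 1/2 := by linarith
  have hB : (0:ℝ) ≤ x - 1000*a - 2000 := by linarith
  simp only [wN]
  linarith [mul_nonneg (pow_nonneg hA 0) (pow_nonneg hB 0),
    mul_nonneg (pow_nonneg hA 0) (pow_nonneg hB 1),
    mul_nonneg (pow_nonneg hA 0) (pow_nonneg hB 2),
    mul_nonneg (pow_nonneg hA 0) (pow_nonneg hB 3),
    mul_nonneg (pow_nonneg hA 0) (pow_nonneg hB 4),
    mul_nonneg (pow_nonneg hA 1) (pow_nonneg hB 0),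
    mul_nonneg (pow_nonneg hA 1) (pow_nonneg hB 1),
    mul_nonneg (pow_nonneg hA 1) (pow_nonneg hB 2),
    mul_nonneg (pow_nonneg hA 1) (pow_nonneg hB 3),
    mul_nonneg (pow_nonneg hA 2) (pow_nonneg hB 0),
    mul_nonneg (pow_nonneg hA 2) (pow_nonneg hB 1),
    mul_nonneg (pow_nonneg hA 2) (pow_nonneg hB 2),
    mul_nonneg (pow_nonneg hA 3) (pow_nonneg hB 0),
    mul_nonneg (pow_nonneg hA 3) (pow_nonneg hB 1),
    mul_nonneg (pow_nonneg hA 4) (pow_nonneg hB 0)]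

lemma keyML0 (a x : ℝ) (ha : -(1/2:ℝ) ≤ a) (hax : 1000*(a+2) ≤ x) :
    mN a x ≤ 8*x^2 := by
  have hA : (0:ℝ) ≤ a + 1/2 := by linarith
  have hB : (0:ℝ) ≤ x - 1000*a - 2000 := by linarith
  simp only [mN]
  linarith [mul_nonneg (pow_nonneg hA 1) (pow_nonneg hB 0),
    mul_nonneg (pow_nonneg hA 1) (pow_nonneg hB 1),
    mul_nonneg (pow_nonneg hA 2) (pow_nonneg hB 0)]

lemma keyWB1 (a x : ℝ) (ha : -(1/2:ℝ) ≤ a) (hax : 1000*(a+2) ≤ x) :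
    wN (a+1) x ≤ 400*((a+2)*x^2 + (a+2)^3*x) := by
  have hA : (0:ℝ) ≤ a + 1/2 := by linarith
  have hB : (0:ℝ) ≤ x - 1000*a - 2000 := by linarith
  simp only [wN]
  linarith [mul_nonneg (pow_nonneg hA 0) (pow_nonneg hB 0),
    mul_nonneg (pow_nonneg hA 0) (pow_nonneg hB 1),
    mul_nonneg (pow_nonneg hA 1) (pow_nonneg hB 0),
    mul_nonneg (pow_nonneg hA 1) (pow_nonneg hB 1),
    mul_nonneg (pow_nonneg hA 1) (pow_nonneg hB 2),
    mul_nonneg (pow_nonneg hA 2) (pow_nonneg hB 0),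
    mul_nonneg (pow_nonneg hA 2) (pow_nonneg hB 1),
    mul_nonneg (pow_nonneg hA 3) (pow_nonneg hB 0),
    mul_nonneg (pow_nonneg hA 3) (pow_nonneg hB 1),
    mul_nonneg (pow_nonneg hA 4) (pow_nonneg hB 0)]

lemma keyUB1 (a x : ℝ) (ha : -(1/2:ℝ) ≤ a) (hax : 1000*(a+2) ≤ x) :
    8 * wN (a+1) x ≤ 12*x^4 := by
  have hA : (0:ℝ) ≤ a + 1/2 := by linarith
  have hB : (0:ℝ) ≤ x - 1000*a - 2000 := by linarith
  simp only [wN]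
  linarith [mul_nonneg (pow_nonneg hA 0) (pow_nonneg hB 0),
    mul_nonneg (pow_nonneg hA 0) (pow_nonneg hB 1),
    mul_nonneg (pow_nonneg hA 0) (pow_nonneg hB 2),
    mul_nonneg (pow_nonneg hA 0) (pow_nonneg hB 3),
    mul_nonneg (pow_nonneg hA 0) (pow_nonneg hB 4),
    mul_nonneg (pow_nonneg hA 1) (pow_nonneg hB 0),
    mul_nonneg (pow_nonneg hA 1) (pow_nonneg hB 1),
    mul_nonneg (pow_nonneg hA 1) (pow_nonneg hB 2),
    mul_nonneg (pow_nonneg hA 1) (pow_nonneg hB 3),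
    mul_nonneg (pow_nonneg hA 2) (pow_nonneg hB 0),
    mul_nonneg (pow_nonneg hA 2) (pow_nonneg hB 1),
    mul_nonneg (pow_nonneg hA 2) (pow_nonneg hB 2),
    mul_nonneg (pow_nonneg hA 3) (pow_nonneg hB 0),
    mul_nonneg (pow_nonneg hA 3) (pow_nonneg hB 1),
    mul_nonneg (pow_nonneg hA 4) (pow_nonneg hB 0)]

lemma keyML1 (a x : ℝ) (ha : -(1/2:ℝ) ≤ a) (hax : 1000*(a+2) ≤ x) :
    mN (a+1) x ≤ 8*x^2 := by
  have hA : (0:ℝ) ≤ a + 1/2 := by linarith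
  have hB : (0:ℝ) ≤ x - 1000*a - 2000 := by linarith
  simp only [mN]
  linarith [mul_nonneg (pow_nonneg hA 0) (pow_nonneg hB 0),
    mul_nonneg (pow_nonneg hA 0) (pow_nonneg hB 1),
    mul_nonneg (pow_nonneg hA 1) (pow_nonneg hB 0),
    mul_nonneg (pow_nonneg hA 1) (pow_nonneg hB 1),
    mul_nonneg (pow_nonneg hA 2) (pow_nonneg hB 0)]

lemma keyWB2 (a x : ℝ) (ha : -(1/2:ℝ) ≤ a) (hax : 1000*(a+2) ≤ x) :
    wN (a+2) x ≤ 400*((a+2)*x^2 + (a+2)^3*x) := by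
  have hA : (0:ℝ) ≤ a + 1/2 := by linarith
  have hB : (0:ℝ) ≤ x - 1000*a - 2000 := by linarith
  simp only [wN]
  linarith [mul_nonneg (pow_nonneg hA 0) (pow_nonneg hB 0),
    mul_nonneg (pow_nonneg hA 0) (pow_nonneg hB 1),
    mul_nonneg (pow_nonneg hA 1) (pow_nonneg hB 0),
    mul_nonneg (pow_nonneg hA 1) (pow_nonneg hB 1),
    mul_nonneg (pow_nonneg hA 1) (pow_nonneg hB 2),
    mul_nonneg (pow_nonneg hA 2) (pow_nonneg hB 0),
    mul_nonneg (pow_nonneg hA 2) (pow_nonneg hB 1),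
    mul_nonneg (pow_nonneg hA 3) (pow_nonneg hB 0),
    mul_nonneg (pow_nonneg hA 3) (pow_nonneg hB 1),
    mul_nonneg (pow_nonneg hA 4) (pow_nonneg hB 0)]

lemma keyUB2 (a x : ℝ) (ha : -(1/2:ℝ) ≤ a) (hax : 1000*(a+2) ≤ x) :
    8 * wN (a+2) x ≤ 12*x^4 := by
  have hA : (0:ℝ) ≤ a + 1/2 := by linarith
  have hB : (0:ℝ) ≤ x - 1000*a - 2000 := by linarith
  simp only [wN]
  linarith [mul_nonneg (pow_nonneg hA 0) (pow_nonneg hB 0),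
    mul_nonneg (pow_nonneg hA 0) (pow_nonneg hB 1),
    mul_nonneg (pow_nonneg hA 0) (pow_nonneg hB 2),
    mul_nonneg (pow_nonneg hA 0) (pow_nonneg hB 3),
    mul_nonneg (pow_nonneg hA 0) (pow_nonneg hB 4),
    mul_nonneg (pow_nonneg hA 1) (pow_nonneg hB 0),
    mul_nonneg (pow_nonneg hA 1) (pow_nonneg hB 1),
    mul_nonneg (pow_nonneg hA 1) (pow_nonneg hB 2),
    mul_nonneg (pow_nonneg hA 1) (pow_nonneg hB 3),
    mul_nonneg (pow_nonneg hA 2) (pow_nonneg hB 0),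
    mul_nonneg (pow_nonneg hA 2) (pow_nonneg hB 1),
    mul_nonneg (pow_nonneg hA 2) (pow_nonneg hB 2),
    mul_nonneg (pow_nonneg hA 3) (pow_nonneg hB 0),
    mul_nonneg (pow_nonneg hA 3) (pow_nonneg hB 1),
    mul_nonneg (pow_nonneg hA 4) (pow_nonneg hB 0)]

lemma keyML2 (a x : ℝ) (ha : -(1/2:ℝ) ≤ a) (hax : 1000*(a+2) ≤ x) :
    mN (a+2) x ≤ 8*x^2 := by
  have hA : (0:ℝ) ≤ a + 1/2 := by linarith
  have hB : (0:ℝ) ≤ x - 1000*a - 2000 := by linarith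
  simp only [mN]
  linarith [mul_nonneg (pow_nonneg hA 0) (pow_nonneg hB 0),
    mul_nonneg (pow_nonneg hA 0) (pow_nonneg hB 1),
    mul_nonneg (pow_nonneg hA 1) (pow_nonneg hB 0),
    mul_nonneg (pow_nonneg hA 1) (pow_nonneg hB 1),
    mul_nonneg (pow_nonneg hA 2) (pow_nonneg hB 0)]

lemma keyRI (a x : ℝ) (ha : -(1/2:ℝ) ≤ a) (hx0 : (0:ℝ) ≤ x) (hxk : x ≤ 1000*(a+2)) :
    8*x^3*((a+1)*(a+2)*(a+3)) + 12*x^4*((a+2)*(a+3)) + 6*x^5*(a+3) + x^6 ≤ (8*10^18) * (8*(a+2)*x*((a+1)*(a+2)*(a+3)) + 8*((a+1)*(a+2)*(a+3))^2) := by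
  have hW : (0:ℝ) ≤ 1000*a + 2000 - x := by linarith
  have hD : (0:ℝ) ≤ a + 1/2 := by linarith
  have hX : (0:ℝ) ≤ x := hx0
  linarith [mul_nonneg (pow_nonneg hW 0) (pow_nonneg hD 0),
    mul_nonneg (pow_nonneg hW 0) (pow_nonneg hD 1),
    mul_nonneg (pow_nonneg hW 0) (pow_nonneg hD 2),
    mul_nonneg (pow_nonneg hW 0) (pow_nonneg hD 3),
    mul_nonneg (pow_nonneg hW 0) (pow_nonneg hD 4),
    mul_nonneg (pow_nonneg hW 0) (pow_nonneg hD 5),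
    mul_nonneg (pow_nonneg hW 0) (pow_nonneg hD 6),
    mul_nonneg (pow_nonneg hW 3) (pow_nonneg hD 0),
    mul_nonneg (pow_nonneg hW 3) (pow_nonneg hD 1),
    mul_nonneg (pow_nonneg hW 3) (pow_nonneg hD 2),
    mul_nonneg (pow_nonneg hW 3) (pow_nonneg hD 3),
    mul_nonneg (pow_nonneg hW 5) (pow_nonneg hD 0),
    mul_nonneg (pow_nonneg hW 5) (pow_nonneg hD 1),
    mul_nonneg (mul_nonneg (pow_nonneg hW 0) (pow_nonneg hD 0)) hX,
    mul_nonneg (mul_nonneg (pow_nonneg hW 0) (pow_nonneg hD 1)) hX,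
    mul_nonneg (mul_nonneg (pow_nonneg hW 0) (pow_nonneg hD 2)) hX,
    mul_nonneg (mul_nonneg (pow_nonneg hW 0) (pow_nonneg hD 3)) hX,
    mul_nonneg (mul_nonneg (pow_nonneg hW 0) (pow_nonneg hD 4)) hX,
    mul_nonneg (mul_nonneg (pow_nonneg hW 0) (pow_nonneg hD 5)) hX,
    mul_nonneg (mul_nonneg (pow_nonneg hW 1) (pow_nonneg hD 0)) hX,
    mul_nonneg (mul_nonneg (pow_nonneg hW 1) (pow_nonneg hD 1)) hX,
    mul_nonneg (mul_nonneg (pow_nonneg hW 1) (pow_nonneg hD 2)) hX,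
    mul_nonneg (mul_nonneg (pow_nonneg hW 1) (pow_nonneg hD 3)) hX,
    mul_nonneg (mul_nonneg (pow_nonneg hW 1) (pow_nonneg hD 4)) hX,
    mul_nonneg (mul_nonneg (pow_nonneg hW 3) (pow_nonneg hD 0)) hX,
    mul_nonneg (mul_nonneg (pow_nonneg hW 3) (pow_nonneg hD 1)) hX,
    mul_nonneg (mul_nonneg (pow_nonneg hW 3) (pow_nonneg hD 2)) hX,
    mul_nonneg (mul_nonneg (pow_nonneg hW 5) (pow_nonneg hD 0)) hX]

def Win (x c : ℝ) : Prop := loN c x ≤ 8*x^4 * rr x c ∧ 8*x^4 * rr x c ≤ hiN c x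

lemma mN_pos (c x : ℝ) (hx : (1500:ℝ) ≤ x) : 0 < mN c x := by
  simp only [mN]; nlinarith [sq_nonneg (x - c)]

lemma wN_pos (c x : ℝ) (hc : -(1/2:ℝ) ≤ c) (hx : (1500:ℝ) ≤ x) : 0 < wN c x := by
  simp only [wN]; nlinarith [sq_nonneg (c+2), sq_nonneg ((c+2)^2)]

lemma hiN_pos (c x : ℝ) (hc : -(1/2:ℝ) ≤ c) (hx : (1500:ℝ) ≤ x) : 0 < hiN c x := by
  have h1 := mN_pos c x hx
  have h2 := wN_pos c x hc hx
  simp only [hiN]; nlinarith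

lemma step (c x : ℝ) (hc : -(1/2:ℝ) ≤ c) (hx : (1500:ℝ) ≤ x) (h2 : Win x (c+2)) :
    Win x c := by
  have hx0 : (0:ℝ) < x := by linarith
  have hr2pos : 0 < rr x (c+2) := rr_pos (by linarith) hx0
  have hr1pos : 0 < rr x (c+1) := rr_pos (by linarith) hx0
  have hr0pos : 0 < rr x c := rr_pos (by linarith) hx0
  have hrec0 : rr x c * (2*(c+1) + x * rr x (c+1)) = x := rr_rec (by linarith) hx0
  have hrec1 : rr x (c+1) * (2*(c+2) + x * rr x (c+2)) = x := by
    have h := rr_rec (b := c+1) (by linarith) hx0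
    rw [show c+1+1 = c+2 by ring] at h; exact h
  have hhiN2 := hiN_pos (c+2) x (by linarith) hx
  have hmN2 := mN_pos (c+2) x hx
  have hwN2 := wN_pos (c+2) x (by linarith) hx
  have hN2p_pos : 0 < N2p c x := by
    simp only [N2p]
    nlinarith [mul_pos hx0 hhiN2, mul_pos (show (0:ℝ) < c+2 by linarith) (pow_pos hx0 4)]
  have hN1p_pos : 0 < N1p c x := by
    simp only [N1p]
    nlinarith [mul_pos (show (0:ℝ) < c+1 by linarith) hN2p_pos, pow_pos hx0 6]
  constructor
  · -- lower bound
    rcases le_or_gt 0 (loN (c+2) x) with hg | hg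
    · -- case A
      have hl : 4*c ≤ 5*x := by
        by_contra hcon
        push_neg at hcon
        exact absurd (gA c x hc hx (by linarith)) (by linarith)
      have hN2m_pos : 0 < N2m c x := by
        simp only [N2m]
        nlinarith [mul_nonneg hx0.le hg, mul_pos (show (0:ℝ) < c+2 by linarith) (pow_pos hx0 4)]
      have hN1m_pos : 0 < N1m c x := by
        simp only [N1m]
        nlinarith [mul_pos (show (0:ℝ) < c+1 by linarith) hN2m_pos, pow_pos hx0 6]
      have l1 : N2m c x ≤ 8*x^4*(2*(c+2) + x*rr x (c+2)) := by
        have hm := mul_le_mul_of_nonneg_left h2.1 hx0.le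
        simp only [N2m]; nlinarith [hm]
      have l2 : rr x (c+1) * N2m c x ≤ 8*x^5 := by
        have hmul := mul_le_mul_of_nonneg_left l1 hr1pos.le
        have hq : 8*x^4 * (rr x (c+1) * (2*(c+2) + x * rr x (c+2))) = 8*x^5 := by
          rw [hrec1]; ring
        nlinarith [hmul, hq]
      have l3 : x * N2m c x ≤ rr x c * N1m c x := by
        have hq0 : (rr x c * (2*(c+1) + x * rr x (c+1))) * N2m c x = x * N2m c x := by
          rw [hrec0]
        have hmul := mul_le_mul_of_nonneg_left l2 (mul_pos hx0 hr0pos).le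
        simp only [N1m]
        nlinarith [hmul, hq0]
      have hKL := keyLo c x hc hx hl
      have chain : loN c x * N1m c x ≤ (8*x^4*rr x c) * N1m c x := by
        have h8 := mul_le_mul_of_nonneg_left l3 (by positivity : (0:ℝ) ≤ 8*x^4)
        nlinarith [hKL, h8]
      exact le_of_mul_le_mul_right chain hN1m_pos
    · -- case B
      have hb : 7*x ≤ 10*c := by
        by_contra hcon
        push_neg at hcon
        exact absurd (gB c x hc hx (by linarith)) (by linarith)
      have hup1 : 2*(c+2) * rr x (c+1) ≤ x := by
        have h := rr_upper (b := c+1) (by linarith) hx0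
        rw [show c+1+1 = c+2 by ring] at h; exact h
      have hQ_pos : 0 < 4*(c+1)*(c+2) + x^2 := by nlinarith
      have b1 : 2*x*(c+2) ≤ rr x c * (4*(c+1)*(c+2) + x^2) := by
        have hq0 : 2*(c+2) * (rr x c * (2*(c+1) + x * rr x (c+1))) = 2*(c+2)*x := by
          rw [hrec0]
        have hnn : 0 ≤ x * rr x c * (x - 2*(c+2)*rr x (c+1)) :=
          mul_nonneg (mul_nonneg hx0.le hr0pos.le) (by linarith)
        nlinarith [hq0, hnn]
      have hKG := keyG0 c x hc hx hb
      have chain : loN c x * (4*(c+1)*(c+2) + x^2) ≤ (8*x^4*rr x c) * (4*(c+1)*(c+2) + x^2) := by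
        have h8 := mul_le_mul_of_nonneg_left b1 (by positivity : (0:ℝ) ≤ 8*x^4)
        nlinarith [hKG, h8]
      exact le_of_mul_le_mul_right chain hQ_pos
  · -- upper bound
    have u1 : 8*x^4*(2*(c+2) + x*rr x (c+2)) ≤ N2p c x := by
      have hm := mul_le_mul_of_nonneg_left h2.2 hx0.le
      simp only [N2p]; nlinarith [hm]
    have u2 : 8*x^5 ≤ rr x (c+1) * N2p c x := by
      have hmul := mul_le_mul_of_nonneg_left u1 hr1pos.le
      have hq : 8*x^4 * (rr x (c+1) * (2*(c+2) + x * rr x (c+2))) = 8*x^5 := by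
        rw [hrec1]; ring
      nlinarith [hmul, hq]
    have u3 : rr x c * N1p c x ≤ x * N2p c x := by
      have hq0 : (rr x c * (2*(c+1) + x * rr x (c+1))) * N2p c x = x * N2p c x := by
        rw [hrec0]
      have hmul := mul_le_mul_of_nonneg_left u2 (mul_pos hx0 hr0pos).le
      simp only [N1p]
      nlinarith [hmul, hq0]
    have hKU := keyUp c x hc hx
    have chain : (8*x^4*rr x c) * N1p c x ≤ hiN c x * N1p c x := by
      have h8 := mul_le_mul_of_nonneg_left u3 (by positivity : (0:ℝ) ≤ 8*x^4)
      nlinarith [hKU, h8]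
    exact le_of_mul_le_mul_right chain hN1p_pos

lemma seed (c x : ℝ) (hx : (1500:ℝ) ≤ x) (h1 : 2*x ≤ c) (h2 : c < 2*x + 2) : Win x c := by
  have hx0 : (0:ℝ) < x := by linarith
  have hc1 : (-1:ℝ) < c := by linarith
  have hrpos : 0 < rr x c := rr_pos hc1 hx0
  have hrup : 2*(c+1) * rr x c ≤ x := rr_upper hc1 hx0
  have hp : (2*x)^4 ≤ (c+2)^4 := pow_le_pow_left₀ (by positivity) (by linarith) 4
  have hsq : (c-x)^2 ≤ (x+2)^2 := by nlinarith
  constructor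
  · have hneg : loN c x ≤ 0 := by
      simp only [loN, mN, wN]; nlinarith [sq_nonneg (x-c)]
    nlinarith [mul_pos (by positivity : (0:ℝ) < 8*x^4) hrpos]
  · have hkey : (8*x^4*rr x c) * (c+1) ≤ 4*x^5 := by
      have h4 := mul_le_mul_of_nonneg_left hrup (show (0:ℝ) ≤ 4*x^4 by positivity)
      nlinarith [h4]
    have hbig : 4*x^5 ≤ hiN c x * (c+1) := by
      have hmn := mN_pos c x hx
      have h1' : (0:ℝ) ≤ x^4*(c - 2*x) := mul_nonneg (by positivity) (by linarith)
      have h2' := mul_le_mul_of_nonneg_right hp (show (0:ℝ) ≤ c+1 by linarith)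
      have h3' : (0:ℝ) ≤ (x^2 * mN c x) * (c+1) :=
        mul_nonneg (mul_nonneg (by positivity) hmn.le) (by linarith)
      have h4' : (0:ℝ) ≤ (600*x^2 + 16*(c+2)^2*x) * (c+1) :=
        mul_nonneg (by nlinarith [sq_nonneg (c+2), mul_nonneg (sq_nonneg (c+2)) hx0.le]) (by linarith)
      simp only [hiN, mN, wN]
      simp only [mN] at h3'
      nlinarith [h2', h1', h3', h4', pow_pos hx0 4, pow_pos hx0 5]
    have := le_trans hkey hbig
    exact le_of_mul_le_mul_right this (by linarith)

lemma window_all (x : ℝ) (hx : (1500:ℝ) ≤ x) :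
    ∀ n : ℕ, ∀ c : ℝ, -(1/2:ℝ) ≤ c → 2*x ≤ c + 2*(n:ℝ) → c + 2*(n:ℝ) < 2*x + 2 → Win x c := by
  intro n
  induction n with
  | zero =>
    intro c hc h1 h2
    push_cast at h1 h2
    exact seed c x hx (by linarith) (by linarith)
  | succ n ih =>
    intro c hc h1 h2
    push_cast at h1 h2
    apply step c x hc hx
    exact ih (c+2) (by linarith) (by push_cast; linarith) (by push_cast; linarith)

lemma window_at (x b : ℝ) (hx : (1500:ℝ) ≤ x) (hb : -(1/2:ℝ) ≤ b) (hbx : b ≤ x) :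
    Win x b := by
  have ht0 : (0:ℝ) ≤ x - b/2 := by linarith
  have h1 : x - b/2 ≤ (⌈x - b/2⌉₊ : ℝ) := Nat.le_ceil _
  have h2 : (⌈x - b/2⌉₊ : ℝ) < (x - b/2) + 1 := Nat.ceil_lt_add_one ht0
  exact window_all x hx ⌈x - b/2⌉₊ b hb (by linarith) (by linarith)


lemma prod_bound {u A U P : ℝ} (hu : |u| ≤ U) (hA0 : 0 ≤ A) (hAP : A ≤ P) : |u*A| ≤ U*P := by
  rw [abs_mul, abs_of_nonneg hA0]
  exact mul_le_mul hu hAP hA0 (le_trans (abs_nonneg u) hu)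

lemma regionII (a x : ℝ) (ha : -(1/2:ℝ) ≤ a) (hax : 1000*(a+2) ≤ x) :
    |besselI a x - 3 * besselI (a + 1) x + 3 * besselI (a + 2) x - besselI (a + 3) x| ≤
      (10^19 : ℝ) * ((a + 2) / x ^ 2 + (a + 1) * (a + 2) * (a + 3) / x ^ 3) * besselI a x := by
  have hx : (1500:ℝ) ≤ x := by linarith
  have hx0 : (0:ℝ) < x := by linarith
  have hI0 := besselI_pos (show (-1:ℝ) < a by linarith) hx0
  have hI1 := besselI_pos (show (-1:ℝ) < a+1 by linarith) hx0
  have hI2 := besselI_pos (show (-1:ℝ) < a+2 by linarith) hx0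
  set r0 := rr x a with hr0def
  set r1 := rr x (a+1) with hr1def
  set r2 := rr x (a+2) with hr2def
  have hr0 : 0 < r0 := rr_pos (by linarith) hx0
  have hr1 : 0 < r1 := rr_pos (by linarith) hx0
  have hr2 : 0 < r2 := rr_pos (by linarith) hx0
  have hI1e : besselI (a+1) x = r0 * besselI a x := by
    rw [hr0def]; unfold rr; field_simp
  have hI2e : besselI (a+2) x = r1 * (r0 * besselI a x) := by
    rw [← hI1e, hr1def]; unfold rr
    rw [show a+1+1 = a+2 by ring]; field_simp
  have hI3e : besselI (a+3) x = r2 * (r1 * (r0 * besselI a x)) := by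
    rw [← hI2e, hr2def]; unfold rr
    rw [show a+2+1 = a+3 by ring]; field_simp
  set E : ℝ := 1 - 3*r0 + 3*(r0*r1) - r0*r1*r2 with hEdef
  have hDE : besselI a x - 3 * besselI (a + 1) x + 3 * besselI (a + 2) x - besselI (a + 3) x
      = E * besselI a x := by
    rw [hI1e, hI2e, hI3e, hEdef]; ring
  rw [hDE, abs_mul, abs_of_pos hI0]
  have hEbound : |E| ≤ (10^19 : ℝ) * ((a + 2) / x ^ 2 + (a + 1) * (a + 2) * (a + 3) / x ^ 3) := by
    -- windows
    have w0 := window_at x a hx ha (by linarith)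
    have w1 := window_at x (a+1) hx (by linarith) (by linarith)
    have w2 := window_at x (a+2) hx (by linarith) (by linarith)
    simp only [Win, loN, hiN] at w0 w1 w2
    set M0 := x^2 * mN a x with hM0
    set M1 := x^2 * mN (a+1) x with hM1
    set M2 := x^2 * mN (a+2) x with hM2
    set A0 := 8*x^4*r0 with hA0
    set A1 := 8*x^4*r1 with hA1
    set A2 := 8*x^4*r2 with hA2
    set UB := 3200*((a+2)*x^2 + (a+2)^3*x) with hUB
    have hU0 : |A0 - M0| ≤ 8 * wN a x := abs_le.mpr ⟨by linarith [w0.1], by linarith [w0.2]⟩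
    have hU1 : |A1 - M1| ≤ 8 * wN (a+1) x := abs_le.mpr ⟨by linarith [w1.1], by linarith [w1.2]⟩
    have hU2 : |A2 - M2| ≤ 8 * wN (a+2) x := abs_le.mpr ⟨by linarith [w2.1], by linarith [w2.2]⟩
    have hUB0 : |A0 - M0| ≤ UB := le_trans hU0 (by rw [hUB]; linarith only [keyWB0 a x ha hax])
    have hUB1 : |A1 - M1| ≤ UB := le_trans hU1 (by rw [hUB]; linarith only [keyWB1 a x ha hax])
    have hUB2 : |A2 - M2| ≤ UB := le_trans hU2 (by rw [hUB]; linarith only [keyWB2 a x ha hax])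
    have hmn0 := mN_pos a x hx
    have hmn1 := mN_pos (a+1) x hx
    have hmn2 := mN_pos (a+2) x hx
    have hM0nn : 0 ≤ M0 := by rw [hM0]; positivity
    have hM1nn : 0 ≤ M1 := by rw [hM1]; positivity
    have hM0le : M0 ≤ 8*x^4 := by
      have := mul_le_mul_of_nonneg_left (keyML0 a x ha hax) (sq_nonneg x)
      rw [hM0]; linarith only [this]
    have hM1le : M1 ≤ 8*x^4 := by
      have := mul_le_mul_of_nonneg_left (keyML1 a x ha hax) (sq_nonneg x)
      rw [hM1]; linarith only [this]
    have hA1nn : 0 ≤ A1 := by rw [hA1]; positivity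
    have hA2nn : 0 ≤ A2 := by rw [hA2]; positivity
    have hA1le : A1 ≤ 20*x^4 := by
      have h := (abs_le.mp hU1).2
      linarith only [h, keyUB1 a x ha hax, hM1le, hA1]
    have hA2le : A2 ≤ 20*x^4 := by
      have hM2le : M2 ≤ 8*x^4 := by
        have := mul_le_mul_of_nonneg_left (keyML2 a x ha hax) (sq_nonneg x)
        rw [hM2]; linarith only [this]
      have h := (abs_le.mp hU2).2
      linarith only [h, keyUB2 a x ha hax, hM2le, hA2]
    have hUBnn : 0 ≤ UB := le_trans (abs_nonneg _) hUB0
    -- product bounds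
    have p2 : |(A0 - M0) * A1| ≤ UB * (20*x^4) := prod_bound hUB0 hA1nn hA1le
    have p3 : |(A0 - M0) * A1 * A2| ≤ UB * (20*x^4) * (20*x^4) := prod_bound p2 hA2nn hA2le
    have p4 : |(A1 - M1) * M0| ≤ UB * (8*x^4) := prod_bound hUB1 hM0nn hM0le
    have p5 : |(A1 - M1) * M0 * A2| ≤ UB * (8*x^4) * (20*x^4) := prod_bound p4 hA2nn hA2le
    have hM01 : M0 * M1 ≤ 64*x^8 := by
      have hmm := mul_le_mul hM0le hM1le hM1nn (by positivity : (0:ℝ) ≤ 8*x^4)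
      linarith only [hmm]
    have hM01nn : 0 ≤ M0 * M1 := mul_nonneg hM0nn hM1nn
    have p6 : |(A2 - M2) * (M0 * M1)| ≤ UB * (64*x^8) := prod_bound hUB2 hM01nn hM01
    -- identity
    have hEid : 512*x^12*E =
        x^6*(512*x^6 - 192*(mN a x)*x^4 + 24*(mN a x)*(mN (a+1) x)*x^2 - (mN a x)*(mN (a+1) x)*(mN (a+2) x))
        + (-(192*x^8*(A0 - M0)) + 24*x^4*((A0 - M0)*A1) + 24*x^4*((A1 - M1)*M0)
           - ((A0 - M0)*A1*A2) - ((A1 - M1)*M0*A2) - ((A2 - M2)*(M0*M1))) := by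
      rw [hEdef, hA0, hA1, hA2, hM0, hM1, hM2]; ring
    -- NUM bound
    have hNP := keyMplus a x ha hax
    have hNM := keyMminus a x ha hax
    have hx6 : (0:ℝ) ≤ x^6 := by positivity
    have q0u := mul_le_mul_of_nonneg_left hNM hx6
    have q0l := mul_le_mul_of_nonneg_left hNP hx6
    -- scalar multiplied product bounds
    have q1u := mul_le_mul_of_nonneg_left (abs_le.mp hUB0).2 (show (0:ℝ) ≤ 192*x^8 by positivity)
    have q1l := mul_le_mul_of_nonneg_left (abs_le.mp hUB0).1 (show (0:ℝ) ≤ 192*x^8 by positivity)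
    have q2u := mul_le_mul_of_nonneg_left (abs_le.mp p2).2 (show (0:ℝ) ≤ 24*x^4 by positivity)
    have q2l := mul_le_mul_of_nonneg_left (abs_le.mp p2).1 (show (0:ℝ) ≤ 24*x^4 by positivity)
    have q4u := mul_le_mul_of_nonneg_left (abs_le.mp p4).2 (show (0:ℝ) ≤ 24*x^4 by positivity)
    have q4l := mul_le_mul_of_nonneg_left (abs_le.mp p4).1 (show (0:ℝ) ≤ 24*x^4 by positivity)
    have q3 := abs_le.mp p3
    have q5 := abs_le.mp p5
    have q6 := abs_le.mp p6
    set B : ℝ := x^6*(4096*((a+2)*x^4 + (a+2)^3*x^3)) + 1488*x^8*UB with hB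
    have hup2 : 512*x^12*E ≤ B := by
      rw [hEid, hB]; linarith only [q0u, q1l, q2u, q4u, q3.1, q5.1, q6.1]
    have hlo2 : -B ≤ 512*x^12*E := by
      rw [hEid, hB]; linarith only [q0l, q1u, q2l, q4l, q3.2, q5.2, q6.2]
    -- scalar comparison
    have hcube : (a+2)^3*x^9 ≤ 2*((a+1)*(a+2)*(a+3))*x^9 := by
      have h1 : (0:ℝ) ≤ (a+2) * ((a+2)^2 - 2) := by nlinarith only [ha, sq_nonneg (a+2), sq_nonneg (a-2)]
      have h2 : (a+2)^3 ≤ 2*((a+1)*(a+2)*(a+3)) := by linarith only [h1]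
      have h3 := mul_le_mul_of_nonneg_right h2 (show (0:ℝ) ≤ x^9 by positivity)
      linarith only [h3]
    have hBle : B ≤ 512*(10^19:ℝ)*((a+2)*x^10 + (a+1)*(a+2)*(a+3)*x^9) := by
      rw [hB, hUB]
      have hp10 : (0:ℝ) ≤ (a+2)*x^10 :=
        mul_nonneg (by linarith) (by positivity)
      have hp9 : (0:ℝ) ≤ ((a+1)*(a+2)*(a+3))*x^9 := by
        have : (0:ℝ) ≤ (a+1)*(a+2)*(a+3) := by
          have := mul_nonneg (mul_nonneg (show (0:ℝ) ≤ a+1 by linarith) (show (0:ℝ) ≤ a+2 by linarith)) (show (0:ℝ) ≤ a+3 by linarith)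
          linarith
        exact mul_nonneg this (by positivity)
      linarith only [hcube, hp10, hp9]
    have hbr : (10^19:ℝ) * ((a + 2) / x ^ 2 + (a + 1) * (a + 2) * (a + 3) / x ^ 3) * (512*x^12)
        = 512*(10^19:ℝ)*((a+2)*x^10 + (a+1)*(a+2)*(a+3)*x^9) := by
      field_simp
    have hpos12 : (0:ℝ) < 512*x^12 := by positivity
    rw [abs_le]
    constructor
    · apply le_of_mul_le_mul_right _ hpos12
      calc -((10^19:ℝ) * ((a + 2) / x ^ 2 + (a + 1) * (a + 2) * (a + 3) / x ^ 3)) * (512*x^12)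
          = -((10^19:ℝ) * ((a + 2) / x ^ 2 + (a + 1) * (a + 2) * (a + 3) / x ^ 3) * (512*x^12)) := by ring
        _ = -(512*(10^19:ℝ)*((a+2)*x^10 + (a+1)*(a+2)*(a+3)*x^9)) := by rw [hbr]
        _ ≤ -B := by linarith only [hBle]
        _ ≤ 512*x^12*E := hlo2
        _ = E * (512*x^12) := by ring
    · apply le_of_mul_le_mul_right _ hpos12
      calc E * (512*x^12) = 512*x^12*E := by ring
        _ ≤ B := hup2
        _ ≤ 512*(10^19:ℝ)*((a+2)*x^10 + (a+1)*(a+2)*(a+3)*x^9) := hBle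
        _ = (10^19:ℝ) * ((a + 2) / x ^ 2 + (a + 1) * (a + 2) * (a + 3) / x ^ 3) * (512*x^12) := hbr.symm
  have hfin := mul_le_mul_of_nonneg_right hEbound hI0.le
  linarith only [hfin]


lemma regionI (a x : ℝ) (ha : -(1/2:ℝ) ≤ a) (hx0 : 0 < x) (hxk : x ≤ 1000*(a+2)) :
    |besselI a x - 3 * besselI (a + 1) x + 3 * besselI (a + 2) x - besselI (a + 3) x| ≤
      (10^19 : ℝ) * ((a + 2) / x ^ 2 + (a + 1) * (a + 2) * (a + 3) / x ^ 3) * besselI a x := by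
  have hI0 := besselI_pos (show (-1:ℝ) < a by linarith) hx0
  have hI1 := besselI_pos (show (-1:ℝ) < a+1 by linarith) hx0
  have hI2 := besselI_pos (show (-1:ℝ) < a+2 by linarith) hx0
  have hI3 := besselI_pos (show (-1:ℝ) < a+3 by linarith) hx0
  have hI4 := besselI_pos (show (-1:ℝ) < a+4 by linarith) hx0
  have hI5 := besselI_pos (show (-1:ℝ) < a+5 by linarith) hx0
  -- one-step bounds 2(a+j+1) I_{a+j+1} ≤ x I_{a+j}
  have hrec0 := besselI_recurrence (show (-1:ℝ) < a by linarith) hx0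
  have hrec1 := besselI_recurrence (show (-1:ℝ) < a+1 by linarith) hx0
  have hrec2 := besselI_recurrence (show (-1:ℝ) < a+2 by linarith) hx0
  rw [show a+1+1 = a+2 by ring, show a+1+2 = a+3 by ring] at hrec1
  rw [show a+2+1 = a+3 by ring, show a+2+2 = a+4 by ring] at hrec2
  have h1 : 2*(a+1) * besselI (a+1) x ≤ x * besselI a x := by nlinarith only [hrec0, mul_pos hx0 hI2]
  have h2 : 2*(a+2) * besselI (a+2) x ≤ x * besselI (a+1) x := by nlinarith only [hrec1, mul_pos hx0 hI3]
  have h3 : 2*(a+3) * besselI (a+3) x ≤ x * besselI (a+2) x := by nlinarith only [hrec2, mul_pos hx0 hI4]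
  set I0 := besselI a x
  set I1 := besselI (a+1) x
  set I2 := besselI (a+2) x
  set I3 := besselI (a+3) x
  have ha1 : (0:ℝ) < a+1 := by linarith
  have ha2 : (0:ℝ) < a+2 := by linarith
  have ha3 : (0:ℝ) < a+3 := by linarith
  set P : ℝ := (a+1)*(a+2)*(a+3) with hP
  have hPpos : 0 < P := by rw [hP]; positivity
  -- chained bounds
  have c1 : 24*P*x^3*I1 ≤ 12*((a+2)*(a+3))*x^4*I0 := by
    have := mul_le_mul_of_nonneg_left h1 (show (0:ℝ) ≤ 12*((a+2)*(a+3))*x^3 by positivity)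
    rw [hP]; linarith only [this]
  have c2 : 24*P*x^3*I2 ≤ 6*(a+3)*x^5*I0 := by
    have s1 := mul_le_mul_of_nonneg_left h2 (show (0:ℝ) ≤ 12*(a+1)*(a+3)*x^3 by positivity)
    have s2 := mul_le_mul_of_nonneg_left h1 (show (0:ℝ) ≤ 6*(a+3)*x^4 by positivity)
    rw [hP]; linarith only [s1, s2]
  have c3 : 8*P*x^3*I3 ≤ x^6*I0 := by
    have s1 := mul_le_mul_of_nonneg_left h3 (show (0:ℝ) ≤ 4*(a+1)*(a+2)*x^3 by positivity)
    have s2 := mul_le_mul_of_nonneg_left h2 (show (0:ℝ) ≤ 2*(a+1)*x^4 by positivity)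
    have s3 := mul_le_mul_of_nonneg_left h1 (show (0:ℝ) ≤ x^5 by positivity)
    rw [hP]; linarith only [s1, s2, s3]
  have hScalar := keyRI a x ha hx0.le hxk
  have habs : |I0 - 3*I1 + 3*I2 - I3| ≤ I0 + 3*I1 + 3*I2 + I3 := by
    rw [abs_le]; constructor <;> nlinarith only [hI0, hI1, hI2, hI3]
  have hkey : (I0 + 3*I1 + 3*I2 + I3) * (8*P*x^3) ≤
      ((8*10^18) * (8*(a+2)*x*P + 8*P^2)) * I0 := by
    have hS := mul_le_mul_of_nonneg_right hScalar hI0.le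
    rw [hP] at *
    nlinarith only [c1, c2, c3, hS, mul_pos (mul_pos ha1 ha2) ha3, hx0, hI0,
      mul_pos (mul_pos (mul_pos (mul_pos ha1 ha2) ha3) (pow_pos hx0 3)) hI0]
  have hbr : (10^19 : ℝ) * ((a + 2) / x ^ 2 + (a + 1) * (a + 2) * (a + 3) / x ^ 3) * I0 * (8*P*x^3)
      = ((10^19) * (8*(a+2)*x*P + 8*P^2)) * I0 := by
    rw [hP]; field_simp
  have h8P : (0:ℝ) < 8*P*x^3 := by positivity
  have final : |I0 - 3*I1 + 3*I2 - I3| * (8*P*x^3) ≤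
      ((10^19 : ℝ) * ((a + 2) / x ^ 2 + (a + 1) * (a + 2) * (a + 3) / x ^ 3) * I0) * (8*P*x^3) := by
    rw [hbr]
    have step1 := mul_le_mul_of_nonneg_right habs h8P.le
    have hmono : ((8*10^18:ℝ) * (8*(a+2)*x*P + 8*P^2)) * I0 ≤ ((10^19:ℝ) * (8*(a+2)*x*P + 8*P^2)) * I0 := by
      have hb : (0:ℝ) ≤ (8*(a+2)*x*P + 8*P^2) * I0 := by positivity
      nlinarith only [hb]
    linarith only [step1, hkey, hmono]
  exact le_of_mul_le_mul_right final h8P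



end BesselAux


/-- Bound on an alternating sum of four consecutive modified Bessel functions of the
first kind. -/
theorem stmt3 :
    ∃ C : ℝ, 0 < C ∧ ∀ a : ℝ, -(1 / 2) ≤ a → ∀ x : ℝ, 0 < x →
      |besselI a x - 3 * besselI (a + 1) x + 3 * besselI (a + 2) x - besselI (a + 3) x| ≤
        C * ((a + 2) / x ^ 2 + (a + 1) * (a + 2) * (a + 3) / x ^ 3) * besselI a x := by
  refine ⟨10^19, by norm_num, fun a ha x hx => ?_⟩
  rcases le_or_gt x (1000*(a+2)) with h | h
  · exact BesselAux.regionI a x (by linarith) hx h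
  · exact BesselAux.regionII a x (by linarith) h.le
end
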